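/- arXiv:1704.00699 — 8 statements merged into one kernel-verified Lean document; each statement's English description precedes it below -/
import Mathlib

section
/- Let X and Y be standard Borel spaces, μ a Borel probability measure on X, ν a Borel measure on Y, and R ⊆ X × Y a Borel, locally finite, (μ,ν)-preserving set satisfying ν(R_A) ≥ c·μ(A) for all Borel A ⊆ X, where c > 1. Let n ∈ ℕ and let g be a Borel partial injection from X to Y compatible with R which admits no g-augmenting paths of length less than n. Then μ(X ∖ dom(g)) ≤ c^{-n}. -/
/-!
Let `A k ⊆ X` be the set of endpoints of alternating paths with at most `k` edges of `g` that
start in `X ∖ D` and have distinct vertices. For `k < n` the `R`-image of `A k` lies in `g '' D`,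
since an edge from such a path to a point outside `g '' D` would complete it to an augmenting path
of length at most `k`; moreover `D ∩ g⁻¹' (R-image of A k) ⊆ A (k + 1)`. Expansion and
measure preservation then give `c * μ (A k) ≤ ν (R-image of A k) ≤ μ (A (k + 1))`, so
`c ^ n * μ Dᶜ ≤ μ (A n) ≤ 1`. The sets `A k` need not be Borel, so one follows Borel subsets of
them instead: `R`-images of Borel sets are analytic, and analytic sets are null measurable.
-/

open MeasureTheory Set
open scoped ENNReal

/-- `R ⊆ X × Y` is `(μ,ν)`-preserving: every Borel bijection `f : A → B` between Borel
subsets whose graph is contained in `R` satisfies `μ(A) = ν(B)`. -/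
def MeasurePreservingRel {X Y : Type*} [MeasurableSpace X] [MeasurableSpace Y]
    (R : Set (X × Y)) (μ : Measure X) (ν : Measure Y) : Prop :=
  ∀ (A : Set X) (f : X → Y), MeasurableSet A → Measurable f → Set.InjOn f A →
    (∀ x ∈ A, (x, f x) ∈ R) → μ A = ν (f '' A)

/-- A `g`-augmenting path of length `n` for a partial injection `g` with domain `D`,
relative to `R ⊆ X × Y`: a sequence `(x_0, y_0, …, x_n, y_n)` such that `x_0 ∉ dom(g)`,
the `y_i` are pairwise distinct, `(x_i, y_i) ∈ R` for all `i`, `y_i = g(x_{i+1})` for all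
`i < n`, and `y_n` is not in the image of `g`. -/
def IsAugPath {X Y : Type*} (R : Set (X × Y)) (D : Set X) (g : X → Y) (n : ℕ)
    (x : Fin (n + 1) → X) (y : Fin (n + 1) → Y) : Prop :=
  x 0 ∉ D ∧ Function.Injective y ∧ (∀ i, (x i, y i) ∈ R) ∧
    (∀ i : Fin n, x i.succ ∈ D ∧ g (x i.succ) = y i.castSucc) ∧
    y (Fin.last n) ∉ g '' D

open Filter Topology

theorem mem_image_of_forall_mem_closure_image {Y : Type*} [MetricSpace Y]
    {f : (ℕ → ℕ) → Y} (hf : Continuous f) (b : ℕ → ℕ) {y : Y}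
    (hy : ∀ k, y ∈ closure (f '' {x | ∀ i < k, x i ≤ b i})) :
    y ∈ f '' {x | ∀ i, x i ≤ b i} := by
  have hz : ∀ k : ℕ, ∃ z, (∀ i < k, z i ≤ b i) ∧ dist (f z) y < 1 / (k + 1) := by
    intro k
    obtain ⟨_, ⟨z, hz, rfl⟩, hdist⟩ := Metric.mem_closure_iff.1 (hy k) _ Nat.one_div_pos_of_nat
    exact ⟨z, hz, by rwa [dist_comm]⟩
  choose z hzb hzy using hz
  -- the coordinate `i` of `z k` is bounded by `b i` once `k > i`, so all of `z` lies in a box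
  set B : ℕ → ℕ := fun i => b i + ∑ k ∈ Finset.range (i + 1), z k i
  have hzB : ∀ k, z k ∈ univ.pi fun i => Iic (B i) := by
    intro k i _
    rcases lt_or_ge i k with h | h
    · exact (hzb k i h).trans (Nat.le_add_right _ _)
    · exact (Finset.single_le_sum (f := fun k => z k i) (fun _ _ => Nat.zero_le _)
        (Finset.mem_range.2 (Nat.lt_succ_of_le h))).trans (Nat.le_add_left _ _)
  obtain ⟨x, -, φ, hφ, hzx⟩ :=
    (isCompact_univ_pi fun i => (finite_Iic (B i)).isCompact).tendsto_subseq hzB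
  refine ⟨x, fun i => ?_, ?_⟩
  · refine isClosed_Iic.mem_of_tendsto ((continuous_apply i).continuousAt.tendsto.comp hzx) ?_
    filter_upwards [hφ.tendsto_atTop.eventually_gt_atTop i] with j hj using hzb _ i hj
  · have hfz : Tendsto (fun k => f (z k)) atTop (𝓝 y) :=
      tendsto_iff_dist_tendsto_zero.2 (squeeze_zero (fun _ => dist_nonneg) (fun k => (hzy k).le)
        tendsto_one_div_add_atTop_nhds_zero_nat)
    exact tendsto_nhds_unique ((hf.tendsto x).comp hzx) (hfz.comp hφ.tendsto_atTop)

namespace MeasureTheory.AnalyticSet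

variable {Y : Type*} [TopologicalSpace Y] [PolishSpace Y] [MeasurableSpace Y] [BorelSpace Y]
  {ν : Measure Y} [IsFiniteMeasure ν] {s : Set Y}

theorem exists_measurableSet_subset_le_add (hs : AnalyticSet s) {ε : ℝ≥0∞} (hε : ε ≠ 0) :
    ∃ K, MeasurableSet K ∧ K ⊆ s ∧ ν s ≤ ν K + ε := by
  let := TopologicalSpace.upgradeIsCompletelyMetrizable Y
  rw [AnalyticSet] at hs
  obtain rfl | ⟨f, hf, rfl⟩ := hs
  · exact ⟨∅, .empty, subset_rfl, by simp⟩
  -- Choquet's capacity argument: bound one coordinate at a time, keeping `ν (f '' T)` large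
  set Large : Set (ℕ → ℕ) → Prop := fun T => ν (range f) < ν (f '' T) + ε
  have hshrink : ∀ (k : ℕ) (T : Set (ℕ → ℕ)), ∃ m, Large T → Large (T ∩ {x | x k ≤ m}) := by
    intro k T
    by_cases hT : Large T
    · have hT_eq : f '' T = ⋃ m, f '' (T ∩ {x | x k ≤ m}) := by
        rw [← image_iUnion, ← inter_iUnion,
          iUnion_eq_univ_iff.2 fun x => ⟨x k, (le_rfl : x k ≤ x k)⟩, inter_univ]
      have hmono : Monotone fun m => f '' (T ∩ {x | x k ≤ m}) := fun m m' hm =>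
        image_mono (inter_subset_inter_right _ fun x hx => le_trans hx hm)
      change ν (range f) < ν (f '' T) + ε at hT
      rw [hT_eq, hmono.measure_iUnion, ENNReal.iSup_add, lt_iSup_iff] at hT
      obtain ⟨m, hm⟩ := hT
      exact ⟨m, fun _ => hm⟩
    · exact ⟨0, fun h => absurd h hT⟩
  choose b hb using hshrink
  set T : ℕ → Set (ℕ → ℕ) := fun k => Nat.rec univ (fun k T => T ∩ {x | x k ≤ b k T}) k
  have hT_succ : ∀ k, T (k + 1) = T k ∩ {x | x k ≤ b k (T k)} := fun _ => rfl
  have hT_large : ∀ k, Large (T k) := by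
    intro k
    induction k with
    | zero => simpa [Large, T] using ENNReal.lt_add_right (measure_ne_top ν _) hε
    | succ k ih => exact hT_succ k ▸ hb k (T k) ih
  have hT_anti : Antitone T :=
    antitone_nat_of_succ_le fun k => (hT_succ k).le.trans inter_subset_left
  have hT_box : ∀ k, T k ⊆ {x | ∀ i < k, x i ≤ b i (T i)} := by
    intro k
    induction k with
    | zero => simp
    | succ k ih =>
      rintro x ⟨hxT, hxk⟩ i hi
      rcases Nat.lt_succ_iff_lt_or_eq.1 hi with hi | rfl
      exacts [ih hxT i hi, hxk]
  refine ⟨⋂ k, closure (f '' T k), .iInter fun k => isClosed_closure.measurableSet, ?_, ?_⟩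
  · intro y hy
    exact image_subset_range _ _ <| mem_image_of_forall_mem_closure_image hf _ fun k =>
      closure_mono (image_mono (hT_box k)) (mem_iInter.1 hy k)
  · rw [Antitone.measure_iInter (fun k l hkl => closure_mono (image_mono (hT_anti hkl)))
      (fun k => isClosed_closure.measurableSet.nullMeasurableSet) ⟨0, measure_ne_top ν _⟩,
      ENNReal.iInf_add]
    exact le_iInf fun k => (hT_large k).le.trans (by gcongr; exact subset_closure)

theorem nullMeasurableSet (hs : AnalyticSet s) : NullMeasurableSet s ν := by
  choose K hKm hKs hK using fun n : ℕ => hs.exists_measurableSet_subset_le_add (ν := ν)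
    (ENNReal.inv_ne_zero.2 (ENNReal.natCast_ne_top n))
  have hKm' : MeasurableSet (⋃ n, K n) := .iUnion hKm
  have hle : ν s ≤ ν (⋃ n, K n) := ENNReal.le_of_forall_pos_le_add fun δ hδ _ => by
    obtain ⟨n, hn⟩ := ENNReal.exists_inv_nat_lt (a := δ) (by simpa using hδ.ne')
    exact (hK n).trans (add_le_add (measure_mono (subset_iUnion K n)) hn.le)
  exact hKm'.nullMeasurableSet.congr <| ae_eq_of_subset_of_measure_ge (iUnion_subset hKs) hle
    hKm'.nullMeasurableSet (measure_ne_top _ _)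

end MeasureTheory.AnalyticSet

section AlternatingPaths

variable {X Y : Type*} (R : Set (X × Y)) (D : Set X) (g : X → Y)

/-- The alternating path `x 0, g (x 1), x 1, …, g (x m), x m` is encoded by its `X`-vertices;
for `g` injective on `D`, distinctness of the `X`-vertices amounts to that of the
`Y`-vertices `g (x (i + 1))`. -/
def IsAltPath (m : ℕ) (x : ℕ → X) : Prop :=
  x 0 ∉ D ∧ (∀ i < m, x (i + 1) ∈ D ∧ (x i, g (x (i + 1))) ∈ R) ∧ InjOn x (Iic m)

def altReach (k : ℕ) : Set X :=
  {a | ∃ m ≤ k, ∃ x, IsAltPath R D g m x ∧ x m = a}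

variable {R D g}

theorem IsAltPath.mono {m j : ℕ} {x : ℕ → X} (h : IsAltPath R D g m x) (hj : j ≤ m) :
    IsAltPath R D g j x :=
  ⟨h.1, fun i hi => h.2.1 i (by omega), h.2.2.mono (Iic_subset_Iic.2 hj)⟩

theorem IsAltPath.update {m : ℕ} {x : ℕ → X} {a : X} (h : IsAltPath R D g m x) (ha : a ∈ D)
    (hR : (x m, g a) ∈ R) (hnew : a ∉ x '' Iic m) :
    IsAltPath R D g (m + 1) (Function.update x (m + 1) a) := by
  have heq : EqOn (Function.update x (m + 1) a) x (Iic m) := fun i hi =>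
    Function.update_of_ne (by simp at hi; omega) _ _
  refine ⟨by rw [Function.update_of_ne (by omega)]; exact h.1, fun i hi => ?_, ?_⟩
  · rcases Nat.lt_succ_iff_lt_or_eq.1 hi with hi | rfl
    · rw [Function.update_of_ne (by omega), Function.update_of_ne (by omega)]
      exact h.2.1 i hi
    · rw [Function.update_self, Function.update_of_ne (by omega)]
      exact ⟨ha, hR⟩
  · rw [show Iic (m + 1) = insert (m + 1) (Iic m) from Order.Iic_succ m,
      injOn_insert (by simp), heq.image_eq, Function.update_self]
    exact ⟨h.2.2.congr heq.symm, hnew⟩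

theorem compl_subset_altReach_zero : Dᶜ ⊆ altReach R D g 0 := fun a ha =>
  ⟨0, le_rfl, fun _ => a, ⟨ha, fun i hi => absurd hi (Nat.not_lt_zero i),
    fun i hi j hj _ => by rw [Nat.le_zero.1 hi, Nat.le_zero.1 hj]⟩, rfl⟩

theorem inter_preimage_image_altReach_subset (k : ℕ) :
    D ∩ g ⁻¹' SetRel.image R (altReach R D g k) ⊆ altReach R D g (k + 1) := by
  rintro a ⟨haD, b, ⟨m, hmk, x, hx, rfl⟩, hR⟩
  by_cases hnew : a ∈ x '' Iic m
  · obtain ⟨j, hj, rfl⟩ := hnew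
    exact ⟨j, (mem_Iic.1 hj).trans (by omega), x, hx.mono hj, rfl⟩
  · exact ⟨m + 1, by omega, _, hx.update haD hR hnew, Function.update_self ..⟩

theorem IsAltPath.isAugPath (hinj : InjOn g D) {m : ℕ} {x : ℕ → X} {y : Y}
    (h : IsAltPath R D g m x) (hR : (x m, y) ∈ R) (hy : y ∉ g '' D) :
    IsAugPath R D g m (fun i => x i)
      (Fin.snoc (α := fun _ => Y) (fun i : Fin m => g (x (i + 1))) y) := by
  refine ⟨h.1, Fin.snoc_injective_of_injective ?_ ?_, fun i => ?_, fun i => ?_, by simpa using hy⟩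
  · intro i j hij
    have := h.2.2 (mem_Iic.2 (by omega)) (mem_Iic.2 (by omega))
      (hinj (h.2.1 i i.2).1 (h.2.1 j j.2).1 hij)
    exact Fin.ext (by omega)
  · rintro ⟨i, hi⟩
    exact hy ⟨_, (h.2.1 i i.2).1, hi⟩
  · induction i using Fin.lastCases with
    | last => simpa using hR
    | cast i => simpa using (h.2.1 i i.2).2
  · simpa using (h.2.1 i i.2).1

theorem image_altReach_subset_image (hinj : InjOn g D) {n k : ℕ}
    (hnoaug : ∀ m, m < n → ∀ (x : Fin (m + 1) → X) (y : Fin (m + 1) → Y),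
      ¬ IsAugPath R D g m x y) (hk : k < n) :
    SetRel.image R (altReach R D g k) ⊆ g '' D := by
  rintro y ⟨_, ⟨m, hmk, x, hx, rfl⟩, hR⟩
  by_contra hy
  exact hnoaug m (by omega) _ _ (hx.isAugPath hinj hR hy)

end AlternatingPaths

section Expansion

variable {X Y : Type*} [MeasurableSpace X] [StandardBorelSpace X]
  [MeasurableSpace Y] [StandardBorelSpace Y] {μ : Measure X} {ν : Measure Y}
  {R : Set (X × Y)} {D : Set X} {g : X → Y}

theorem exists_measurableSet_subset_inter_preimage_image [IsFiniteMeasure μ]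
    (hR : MeasurableSet R) (hpres : MeasurePreservingRel R μ ν) (hD : MeasurableSet D)
    (hg : Measurable g) (hinj : InjOn g D) (hcomp : ∀ x ∈ D, (x, g x) ∈ R)
    {B : Set X} (hB : MeasurableSet B) (hBD : SetRel.image R B ⊆ g '' D) :
    ∃ B', MeasurableSet B' ∧ B' ⊆ D ∩ g ⁻¹' SetRel.image R B ∧
      ν (SetRel.image R B) ≤ μ B' := by
  let := upgradeStandardBorel Y
  have hpres_g : ∀ A ⊆ D, MeasurableSet A → μ A = ν (g '' A) := fun A hAD hA =>
    hpres A g hA hg (hinj.mono hAD) fun x hx => hcomp x (hAD hx)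
  have : IsFiniteMeasure (ν.restrict (g '' D)) := ⟨by
    rw [Measure.restrict_apply_univ, ← hpres_g D subset_rfl hD]
    exact measure_lt_top μ D⟩
  have hanalytic : AnalyticSet (SetRel.image R B) := by
    convert (hR.inter (hB.prod .univ)).analyticSet_image measurable_snd
    ext y
    simp [SetRel.image, and_comm]
  obtain ⟨K, hKB, hK, hK_ae⟩ :=
    (hanalytic.nullMeasurableSet (ν := ν.restrict (g '' D))).exists_measurable_subset_ae_eq
  have hKD : K ⊆ g '' D := hKB.trans hBD
  refine ⟨D ∩ g ⁻¹' K, hD.inter (hg hK), inter_subset_inter_right _ (preimage_mono hKB), ?_⟩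
  calc ν (SetRel.image R B) = ν.restrict (g '' D) (SetRel.image R B) :=
        (Measure.restrict_eq_self _ hBD).symm
    _ = ν.restrict (g '' D) K := (measure_congr hK_ae).symm
    _ = ν (g '' (D ∩ g ⁻¹' K)) := by
        rw [Measure.restrict_eq_self _ hKD, image_inter_preimage,
          inter_eq_self_of_subset_right hKD]
    _ ≤ μ (D ∩ g ⁻¹' K) := (hpres_g _ inter_subset_left (hD.inter (hg hK))).ge

theorem exists_measurableSet_subset_altReach [IsFiniteMeasure μ]
    (hR : MeasurableSet R) (hpres : MeasurePreservingRel R μ ν) {c : ℝ≥0∞}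
    (hexp : ∀ A : Set X, MeasurableSet A → c * μ A ≤ ν (SetRel.image R A))
    {n : ℕ} (hD : MeasurableSet D) (hg : Measurable g) (hinj : InjOn g D)
    (hcomp : ∀ x ∈ D, (x, g x) ∈ R)
    (hnoaug : ∀ m, m < n → ∀ (x : Fin (m + 1) → X) (y : Fin (m + 1) → Y),
      ¬ IsAugPath R D g m x y) {k : ℕ} (hk : k ≤ n) :
    ∃ B, MeasurableSet B ∧ B ⊆ altReach R D g k ∧ c ^ k * μ Dᶜ ≤ μ B := by
  induction k with
  | zero => exact ⟨Dᶜ, hD.compl, compl_subset_altReach_zero, by simp⟩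
  | succ k ih =>
    obtain ⟨B, hB, hB_reach, hμB⟩ := ih (by omega)
    have hBD : SetRel.image R B ⊆ g '' D :=
      (SetRel.image_subset_image hB_reach).trans (image_altReach_subset_image hinj hnoaug hk)
    obtain ⟨B', hB', hB'_sub, hνB⟩ :=
      exists_measurableSet_subset_inter_preimage_image hR hpres hD hg hinj hcomp hB hBD
    refine ⟨B', hB', hB'_sub.trans <| (inter_subset_inter_right _ <| preimage_mono <|
      SetRel.image_subset_image hB_reach).trans (inter_preimage_image_altReach_subset k), ?_⟩
    calc c ^ (k + 1) * μ Dᶜ = c * (c ^ k * μ Dᶜ) := by ring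
      _ ≤ c * μ B := by gcongr
      _ ≤ ν (SetRel.image R B) := hexp B hB
      _ ≤ μ B' := hνB

end Expansion

theorem stmt1_general {X Y : Type*} [MeasurableSpace X] [StandardBorelSpace X]
    [MeasurableSpace Y] [StandardBorelSpace Y]
    (μ : Measure X) [IsProbabilityMeasure μ] (ν : Measure Y)
    (R : Set (X × Y)) (hR : MeasurableSet R)
    (hpres : MeasurePreservingRel R μ ν)
    (c : ℝ≥0∞)
    (hexp : ∀ A : Set X, MeasurableSet A → c * μ A ≤ ν {y | ∃ x ∈ A, (x, y) ∈ R})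
    (n : ℕ) (D : Set X) (g : X → Y) (hD : MeasurableSet D) (hg : Measurable g)
    (hinj : Set.InjOn g D) (hcomp : ∀ x ∈ D, (x, g x) ∈ R)
    (hnoaug : ∀ m, m < n → ∀ (x : Fin (m + 1) → X) (y : Fin (m + 1) → Y),
      ¬ IsAugPath R D g m x y) :
    μ Dᶜ ≤ c⁻¹ ^ n := by
  obtain ⟨B, -, -, hB⟩ :=
    exists_measurableSet_subset_altReach hR hpres hexp hD hg hinj hcomp hnoaug le_rfl
  rw [← ENNReal.inv_pow, ENNReal.le_inv_iff_mul_le, mul_comm]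
  exact hB.trans prob_le_one

/-- If the Borel partial injection `g` (with Borel domain `D`) compatible with `R` admits no
augmenting path of length less than `n`, then `μ(X ∖ dom g) ≤ c⁻ⁿ`. -/
theorem stmt1 {X Y : Type*} [MeasurableSpace X] [StandardBorelSpace X]
    [MeasurableSpace Y] [StandardBorelSpace Y]
    (μ : Measure X) [IsProbabilityMeasure μ] (ν : Measure Y)
    (R : Set (X × Y)) (hR : MeasurableSet R)
    (hlocX : ∀ x : X, {y | (x, y) ∈ R}.Finite)
    (hlocY : ∀ y : Y, {x | (x, y) ∈ R}.Finite)
    (hpres : MeasurePreservingRel R μ ν)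
    (c : ℝ≥0∞) (hc : 1 < c)
    (hexp : ∀ A : Set X, MeasurableSet A → c * μ A ≤ ν {y | ∃ x ∈ A, (x, y) ∈ R})
    (n : ℕ) (D : Set X) (g : X → Y) (hD : MeasurableSet D) (hg : Measurable g)
    (hinj : Set.InjOn g D) (hcomp : ∀ x ∈ D, (x, g x) ∈ R)
    (hnoaug : ∀ m, m < n → ∀ (x : Fin (m + 1) → X) (y : Fin (m + 1) → Y),
      ¬ IsAugPath R D g m x y) :
    μ Dᶜ ≤ c⁻¹ ^ n :=
  stmt1_general μ ν R hR hpres c hexp n D g hD hg hinj hcomp hnoaug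
end

section
/- Every locally finite Borel graph on a standard Borel space has a Borel ℕ-coloring, i.e., a Borel function c : X → ℕ such that c(x) ≠ c(y) whenever x and y are adjacent. -/
/-!
Fix a countable basis `(V n)` of a compatible Polish topology. The neighbourhood of `x` is finite
and misses `x`, so some `V n` contains `x` and none of its neighbours: the independent sets `I n` of
points of `V n` without neighbours in `V n` cover `X`. Their complements are analytic, so Novikov's
separation theorem shrinks them to a Borel cover, and the least index of a member of that cover
containing `x` is a Borel colouring.

Novikov's theorem is proved like Lusin's separation theorem. If the ranges of continuous maps `f n`
on the Baire space have no Borel separation, refining the domains one cylinder coordinate at a time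
while keeping the family of images non-separable yields points `x n` such that the images of
cylinders around the `x n` are never separable. Disjoint neighbourhoods of two distinct values
`f m (x m)` and `f n (x n)` would separate them, so these values coincide and lie in every range.
-/

open MeasureTheory Set PiNat Function

section Separation

variable {α : Type*} [MeasurableSpace α]

def MeasurablySeparableSeq (s : ℕ → Set α) : Prop :=
  ∃ u : ℕ → Set α, (∀ n, s n ⊆ u n) ∧ (⋂ n, u n) = ∅ ∧ ∀ n, MeasurableSet (u n)

theorem measurablySeparableSeq_of_disjoint {s : ℕ → Set α} {m n : ℕ} {u v : Set α}
    (hu : MeasurableSet u) (hv : MeasurableSet v) (huv : Disjoint u v)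
    (hm : s m ⊆ u) (hn : s n ⊆ v) : MeasurablySeparableSeq s := by
  classical
  refine ⟨fun k => (if k = m then u else univ) ∩ (if k = n then v else univ), fun k => ?_, ?_,
    fun k => ?_⟩
  · exact subset_inter (by split_ifs with h; exacts [h ▸ hm, subset_univ _])
      (by split_ifs with h; exacts [h ▸ hn, subset_univ _])
  · exact eq_empty_of_subset_empty fun x hx => disjoint_left.1 huv
      (by simpa using (mem_iInter.1 hx m).1) (by simpa using (mem_iInter.1 hx n).2)
  · exact MeasurableSet.inter (by split_ifs <;> simp [hu]) (by split_ifs <;> simp [hv])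

theorem measurablySeparableSeq_of_subset_iUnion {s : ℕ → Set α} {t : ℕ → ℕ → Set α} {m : ℕ}
    (hm : s m ⊆ ⋃ k, t k m) (hn : ∀ k n, n ≠ m → s n ⊆ t k n)
    (ht : ∀ k, MeasurablySeparableSeq (t k)) : MeasurablySeparableSeq s := by
  choose u hsub hempty hmeas using ht
  refine ⟨update (fun n => ⋂ k, u k n) m (⋃ k, u k m), fun n => ?_, ?_, fun n => ?_⟩
  · rcases eq_or_ne n m with rfl | hnm
    · rw [update_self]
      exact hm.trans (iUnion_mono fun k => hsub k n)
    · rw [update_of_ne hnm]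
      exact subset_iInter fun k => (hn k n hnm).trans (hsub k n)
  · refine eq_empty_of_subset_empty fun x hx => ?_
    have hxm := mem_iInter.1 hx m
    rw [update_self] at hxm
    obtain ⟨k, hk⟩ := mem_iUnion.1 hxm
    rw [← hempty k]
    refine mem_iInter.2 fun n => ?_
    rcases eq_or_ne n m with rfl | hnm
    · exact hk
    · have hxn := mem_iInter.1 hx n
      rw [update_of_ne hnm] at hxn
      exact mem_iInter.1 hxn k
  · rcases eq_or_ne n m with rfl | hnm
    · rw [update_self]
      exact .iUnion fun k => hmeas k n
    · rw [update_of_ne hnm]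
      exact .iInter fun k => hmeas k n

end Separation

theorem exists_forall_of_exists_update {β : Type*} {P : ℕ → (ℕ → β) → Prop}
    (hP : ∀ t z, ∀ z' ∈ cylinder z t, P t z → P t z') {z₀ : ℕ → β} (h₀ : P 0 z₀)
    (hstep : ∀ t z, P t z → ∃ b, P (t + 1) (update z t b)) : ∃ z, ∀ t, P t z := by
  have : Nonempty β := ⟨z₀ 0⟩
  choose! g hg using hstep
  let seq : ℕ → ℕ → β := fun t => Nat.rec z₀ (fun t z => update z t (g t z)) t
  have hseq : ∀ t, P t (seq t) := fun t => Nat.rec h₀ (fun t ih => hg t _ ih) t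
  have hlimit : ∀ t, (fun i => seq (i + 1) i) ∈ cylinder (seq t) t := by
    intro t
    induction t with
    | zero => exact mem_cylinder_iff.2 fun i hi => absurd hi (Nat.not_lt_zero i)
    | succ t ih =>
      refine mem_cylinder_iff.2 fun i hi => ?_
      rcases Nat.lt_succ_iff_lt_or_eq.1 hi with hi | rfl
      · rw [show seq (t + 1) = update (seq t) t (g t (seq t)) from rfl, update_of_ne hi.ne]
        exact mem_cylinder_iff.1 ih i hi
      · rfl
  exact ⟨_, fun t => hP t _ _ (hlimit t) (hseq t)⟩

theorem exists_cylinder_subset_of_mem_nhds {E : ℕ → Type*} [∀ n, TopologicalSpace (E n)]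
    [∀ n, DiscreteTopology (E n)] {x : ∀ n, E n} {U : Set (∀ n, E n)} (hU : U ∈ nhds x) :
    ∃ N, cylinder x N ⊆ U := by
  obtain ⟨_, ⟨y, N, rfl⟩, hx, hsub⟩ := (isTopologicalBasis_cylinders E).mem_nhds_iff.1 hU
  exact ⟨N, (mem_cylinder_iff_eq.1 hx) ▸ hsub⟩

/-- `z` encodes the sequence of points `i ↦ z (pair n i)` of the Baire space, and
`pairCylinder z t n` is the set of points agreeing with the `n`-th one wherever `pair n i < t`.
Passing from `t` to `t + 1` constrains one more coordinate of exactly one of these cylinders. -/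
def pairCylinder (z : ℕ → ℕ) (t n : ℕ) : Set (ℕ → ℕ) :=
  {x | ∀ i, Nat.pair n i < t → x i = z (Nat.pair n i)}

theorem pairCylinder_zero (z : ℕ → ℕ) (n : ℕ) : pairCylinder z 0 n = univ :=
  eq_univ_of_forall fun _ _ hi => absurd hi (Nat.not_lt_zero _)

theorem pairCylinder_congr {z z' : ℕ → ℕ} {t : ℕ} (h : z' ∈ cylinder z t) (n : ℕ) :
    pairCylinder z' t n = pairCylinder z t n := by
  ext x
  refine forall_congr' fun i => imp_congr_right fun hi => ?_
  rw [mem_cylinder_iff.1 h _ hi]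

theorem mem_pairCylinder_succ {z x : ℕ → ℕ} {t n k : ℕ} (hx : x ∈ pairCylinder z t n)
    (hk : n = (Nat.unpair t).1 → x (Nat.unpair t).2 = k) :
    x ∈ pairCylinder (update z t k) (t + 1) n := by
  intro i hi
  rcases Nat.lt_succ_iff_lt_or_eq.1 hi with hi | hi
  · rw [update_of_ne hi.ne]
    exact hx i hi
  · subst hi
    rw [update_self]
    simpa only [Nat.unpair_pair, forall_const] using hk

theorem pairCylinder_subset_cylinder {z : ℕ → ℕ} {t n N : ℕ} (h : Nat.pair n N ≤ t) :
    pairCylinder z t n ⊆ cylinder (fun i => z (Nat.pair n i)) N := fun _ hx =>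
  mem_cylinder_iff.2 fun i hi => hx i ((Nat.pair_lt_pair_right n hi).trans_le h)

section Novikov

variable {α : Type*} [MeasurableSpace α]

theorem exists_update_not_measurablySeparableSeq {f : ℕ → (ℕ → ℕ) → α} {z : ℕ → ℕ} {t : ℕ}
    (h : ¬ MeasurablySeparableSeq fun n => f n '' pairCylinder z t n) :
    ∃ k, ¬ MeasurablySeparableSeq fun n => f n '' pairCylinder (update z t k) (t + 1) n := by
  contrapose! h
  refine measurablySeparableSeq_of_subset_iUnion (m := (Nat.unpair t).1) ?_
    (fun k n hn => image_mono fun x hx => mem_pairCylinder_succ hx fun h => absurd h hn) h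
  rintro _ ⟨x, hx, rfl⟩
  exact mem_iUnion.2
    ⟨x (Nat.unpair t).2, mem_image_of_mem _ (mem_pairCylinder_succ hx fun _ => rfl)⟩

variable [TopologicalSpace α] [T2Space α] [OpensMeasurableSpace α]

theorem measurablySeparableSeq_range {f : ℕ → (ℕ → ℕ) → α} (hf : ∀ n, Continuous (f n))
    (h : ⋂ n, range (f n) = ∅) : MeasurablySeparableSeq fun n => range (f n) := by
  by_contra hsep
  obtain ⟨z, hz⟩ : ∃ z, ∀ t, ¬ MeasurablySeparableSeq fun n => f n '' pairCylinder z t n :=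
    exists_forall_of_exists_update
      (fun t z z' hz' => by simp only [pairCylinder_congr hz', imp_self])
      (z₀ := 0) (by simpa only [pairCylinder_zero, image_univ] using hsep)
      fun t z => exists_update_not_measurablySeparableSeq
  set x : ℕ → ℕ → ℕ := fun n i => z (Nat.pair n i)
  have hconst : ∀ m n, f m (x m) = f n (x n) := by
    intro m n
    by_contra hne
    obtain ⟨u, v, hu, hv, hxu, hxv, huv⟩ := t2_separation hne
    obtain ⟨M, hM⟩ := exists_cylinder_subset_of_mem_nhds ((hf m).continuousAt (hu.mem_nhds hxu))
    obtain ⟨N, hN⟩ := exists_cylinder_subset_of_mem_nhds ((hf n).continuousAt (hv.mem_nhds hxv))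
    refine hz (max (Nat.pair m M) (Nat.pair n N)) (measurablySeparableSeq_of_disjoint
      (m := m) (n := n) hu.measurableSet hv.measurableSet huv ?_ ?_)
    · exact image_subset_iff.2 ((pairCylinder_subset_cylinder (le_max_left _ _)).trans hM)
    · exact image_subset_iff.2 ((pairCylinder_subset_cylinder (le_max_right _ _)).trans hN)
  exact (eq_empty_iff_forall_notMem.1 h) (f 0 (x 0))
    (mem_iInter.2 fun n => ⟨x n, (hconst 0 n).symm⟩)

/-- **Novikov's separation theorem**. -/
theorem AnalyticSet.measurablySeparableSeq {s : ℕ → Set α} (hs : ∀ n, AnalyticSet (s n))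
    (h : ⋂ n, s n = ∅) : MeasurablySeparableSeq s := by
  by_cases hempty : ∃ n, s n = ∅
  · obtain ⟨n, hn⟩ := hempty
    exact measurablySeparableSeq_of_disjoint (m := n) .empty .empty (disjoint_empty _)
      hn.subset hn.subset
  push Not at hempty
  choose f hf hrange using fun n =>
    (((AnalyticSet_def _).mp (hs n)).resolve_left (hempty n).ne_empty :
      ∃ f : (ℕ → ℕ) → α, Continuous f ∧ range f = s n)
  simpa only [hrange] using measurablySeparableSeq_range hf (by simpa only [hrange] using h)

end Novikov

theorem exists_measurable_coloring_of_cover {X : Type*} [MeasurableSpace X] (G : Set (X × X))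
    {t : ℕ → Set X} (ht : ∀ n, MeasurableSet (t n)) (hcover : ∀ x, ∃ n, x ∈ t n)
    (hindep : ∀ n x y, x ∈ t n → y ∈ t n → (x, y) ∉ G) :
    ∃ c : X → ℕ, Measurable c ∧ ∀ x y : X, (x, y) ∈ G → c x ≠ c y := by
  classical
  refine ⟨fun x => Nat.find (hcover x), measurable_find hcover ht,
    fun x y hxy (hc : Nat.find _ = Nat.find _) => ?_⟩
  exact hindep _ x y (Nat.find_spec (hcover x)) (hc ▸ Nat.find_spec (hcover y)) hxy

theorem exists_measurable_independent_cover {X : Type*} [TopologicalSpace X] [PolishSpace X]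
    [MeasurableSpace X] [BorelSpace X] (G : Set (X × X)) (hG : MeasurableSet G)
    (hirr : ∀ x : X, (x, x) ∉ G) (hlf : ∀ x : X, {y | (x, y) ∈ G}.Finite) :
    ∃ t : ℕ → Set X, (∀ n, MeasurableSet (t n)) ∧ (∀ x, ∃ n, x ∈ t n) ∧
      ∀ n x y, x ∈ t n → y ∈ t n → (x, y) ∉ G := by
  obtain ⟨b, hbc, -, hb⟩ := TopologicalSpace.exists_countable_basis X
  obtain ⟨V, hV⟩ := (hbc.insert ∅).exists_eq_range (insert_nonempty _ _)
  have hVb : TopologicalSpace.IsTopologicalBasis (range V) := hV ▸ hb.insert_empty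
  set I : ℕ → Set X := fun n => V n ∩ {x | ∀ y ∈ V n, (x, y) ∉ G}
  have hI : ∀ n, (I n)ᶜ = (V n)ᶜ ∪ Prod.fst '' (G ∩ univ ×ˢ V n) := by
    intro n
    ext x
    simp [I, imp_iff_not_or, and_comm]
  have hI_analytic : ∀ n, AnalyticSet (I n)ᶜ := by
    intro n
    rw [hI, union_eq_iUnion]
    refine AnalyticSet.iUnion (Bool.forall_bool.2 ⟨?_, ?_⟩)
    · exact ((hG.inter (MeasurableSet.univ.prod (hVb.isOpen (mem_range_self n)).measurableSet))
        |>.analyticSet).image_of_continuous continuous_fst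
    · exact (hVb.isOpen (mem_range_self n)).isClosed_compl.analyticSet
  have hI_cover : ⋂ n, (I n)ᶜ = ∅ := by
    refine eq_empty_of_forall_notMem fun x hx => ?_
    obtain ⟨_, ⟨n, rfl⟩, hxn, hn⟩ :=
      hVb.exists_subset_of_mem_open (hirr x) (hlf x).isClosed.isOpen_compl
    exact mem_iInter.1 hx n ⟨hxn, fun y hy => hn hy⟩
  obtain ⟨u, hIu, hu, hu_meas⟩ := AnalyticSet.measurablySeparableSeq hI_analytic hI_cover
  refine ⟨fun n => (u n)ᶜ, fun n => (hu_meas n).compl, fun x => ?_, fun n x y hx hy => ?_⟩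
  · simpa using (eq_empty_iff_forall_notMem.1 hu x)
  · exact (compl_subset_comm.1 (hIu n) hx).2 y (compl_subset_comm.1 (hIu n) hy).1

theorem stmt2_general {X : Type*} [MeasurableSpace X] [StandardBorelSpace X]
    (G : Set (X × X)) (hG : MeasurableSet G)
    (hirr : ∀ x : X, (x, x) ∉ G)
    (hlf : ∀ x : X, {y | (x, y) ∈ G}.Finite) :
    ∃ c : X → ℕ, Measurable c ∧ ∀ x y : X, (x, y) ∈ G → c x ≠ c y := by
  let := upgradeStandardBorel X
  obtain ⟨t, ht, hcover, hindep⟩ := exists_measurable_independent_cover G hG hirr hlf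
  exact exists_measurable_coloring_of_cover G ht hcover hindep

/-- **Kechris–Solecki–Todorcevic.** Every locally finite Borel graph (an irreflexive
symmetric Borel subset of `X × X`) on a standard Borel space has a Borel ℕ-coloring. -/
theorem stmt2 {X : Type*} [MeasurableSpace X] [StandardBorelSpace X]
    (G : Set (X × X)) (hG : MeasurableSet G)
    (hirr : ∀ x : X, (x, x) ∉ G)
    (hsym : ∀ x y : X, (x, y) ∈ G → (y, x) ∈ G)
    (hlf : ∀ x : X, {y | (x, y) ∈ G}.Finite) :
    ∃ c : X → ℕ, Measurable c ∧ ∀ x y : X, (x, y) ∈ G → c x ≠ c y :=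
  stmt2_general G hG hirr hlf
end

section
/- If a Borel graph on a standard Borel space X has all vertex degrees bounded by d ∈ ℕ, then it has a Borel (d+1)-coloring, i.e., a Borel function c : X → {1, …, d+1} giving adjacent points distinct colors. -/
/-!
Fix a Borel injection `e : X → ℝ`. If every `G`-section has at most `d` points, then for Borel `A`
the set of `x` with at least `k` neighbours in `A` is Borel, by downward induction on `k` from
`k = d + 1`: the points with exactly `k` such neighbours are the projection of the Borel set of
pairs `(x, v)` with `v` an `e`-increasing `k`-tuple of neighbours of `x` in `A`, and this projection
is injective because a finite set has a unique increasing enumeration, so Lusin–Souslin applies.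
Hence `G`-neighbourhoods of Borel sets are Borel. Giving each `x` the least index of a basic open
set of a Polish topology that contains `x` but none of its (finitely many) neighbours yields a
Borel proper colouring with countably many colours, and the greedy algorithm run along it, which
gives `x` the least colour not used by its neighbours of smaller index, uses only `d + 1` colours.
-/

open MeasureTheory Set

section StrictMonoEnumeration

variable {X β : Type*} [LinearOrder β] {e : X → β} {F : Set X}

theorem eq_of_strictMono_comp_of_ncard_le (he : Function.Injective e) (hF : F.Finite) {k : ℕ}
    (hk : F.ncard ≤ k) {v w : Fin k → X} (hv : StrictMono (e ∘ v)) (hw : StrictMono (e ∘ w))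
    (hvF : ∀ i, v i ∈ F) (hwF : ∀ i, w i ∈ F) : v = w := by
  have range_eq : ∀ u : Fin k → X, StrictMono (e ∘ u) → (∀ i, u i ∈ F) → range u = F :=
    fun u hu huF => eq_of_subset_of_ncard_le (range_subset_iff.2 huF)
      (by rwa [ncard_range_of_injective hu.injective.of_comp, Nat.card_eq_fintype_card,
        Fintype.card_fin]) hF
  have : e ∘ v = e ∘ w := by
    rw [← hv.range_inj hw, range_comp, range_comp, range_eq v hv hvF, range_eq w hw hwF]
  exact he.comp_left this

theorem exists_strictMono_comp_of_ncard_eq (he : InjOn e F) (hF : F.Finite) {k : ℕ}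
    (hk : F.ncard = k) : ∃ v : Fin k → X, StrictMono (e ∘ v) ∧ ∀ i, v i ∈ F := by
  classical
  set s : Finset β := (hF.image e).toFinset
  have hs : s.card = k := by
    rw [← ncard_eq_toFinset_card _ (hF.image e), he.ncard_image, hk]
  have hmem : ∀ i, ∃ y ∈ F, e y = s.orderEmbOfFin hs i := by
    intro i
    simpa only [s, Finite.mem_toFinset, mem_image] using s.orderEmbOfFin_mem hs i
  choose v hvF hve using hmem
  refine ⟨v, fun i j hij => ?_, hvF⟩
  simpa only [Function.comp_apply, hve] using (s.orderEmbOfFin hs).strictMono hij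

end StrictMonoEnumeration

section Neighbourhood

variable {X : Type*} [MeasurableSpace X] {G : Set (X × X)} {A : Set X}

theorem measurableSet_strictMono_tuple_mem_section {e : X → ℝ} (he : Measurable e)
    (hG : MeasurableSet G) (hA : MeasurableSet A) (k : ℕ) :
    MeasurableSet {p : X × (Fin k → X) |
      StrictMono (e ∘ p.2) ∧ ∀ i, p.2 i ∈ {y | (p.1, y) ∈ G} ∩ A} := by
  have hmono : MeasurableSet {p : X × (Fin k → X) | StrictMono (e ∘ p.2)} := by
    simp only [StrictMono]
    measurability
  have hsec : MeasurableSet {p : X × (Fin k → X) | ∀ i, p.2 i ∈ {y | (p.1, y) ∈ G} ∩ A} := by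
    simp only [ofPred_forall]
    exact .iInter fun i =>
      (measurable_fst.prodMk ((measurable_pi_apply i).comp measurable_snd) hG).inter
        ((measurable_pi_apply i).comp measurable_snd hA)
  exact hmono.inter hsec

theorem measurableSet_le_ncard_inter_of_succ [StandardBorelSpace X] {e : X → ℝ}
    (he : Measurable e) (he_inj : Function.Injective e) (hG : MeasurableSet G)
    (hfin : ∀ x, {y | (x, y) ∈ G}.Finite) (hA : MeasurableSet A) {k : ℕ}
    (hk : MeasurableSet {x | k + 1 ≤ ({y | (x, y) ∈ G} ∩ A).ncard}) :
    MeasurableSet {x | k ≤ ({y | (x, y) ∈ G} ∩ A).ncard} := by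
  set S := {x | k + 1 ≤ ({y | (x, y) ∈ G} ∩ A).ncard}
  set T : Set (X × (Fin k → X)) :=
    {p | (StrictMono (e ∘ p.2) ∧ ∀ i, p.2 i ∈ {y | (p.1, y) ∈ G} ∩ A) ∧ p.1 ∉ S}
  have hT : MeasurableSet T :=
    (measurableSet_strictMono_tuple_mem_section he hG hA k).inter (measurable_fst hk.compl)
  have hinj : InjOn Prod.fst T := by
    rintro ⟨x, v⟩ ⟨⟨hv, hvF⟩, hvS⟩ ⟨x', w⟩ ⟨⟨hw, hwF⟩, -⟩ (rfl : x = x')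
    have hle : ({y | (x, y) ∈ G} ∩ A).ncard ≤ k := by simpa [S] using hvS
    exact congrArg (Prod.mk x)
      (eq_of_strictMono_comp_of_ncard_le he_inj ((hfin x).inter_of_left A) hle hv hw hvF hwF)
  have himg : Prod.fst '' T = {x | k ≤ ({y | (x, y) ∈ G} ∩ A).ncard} \ S := by
    ext x
    constructor
    · rintro ⟨⟨x, v⟩, ⟨⟨hv, hvF⟩, hvS⟩, rfl⟩
      refine ⟨?_, hvS⟩
      simpa using ncard_le_ncard_of_injOn (s := univ) v (fun i _ => hvF i)
        hv.injective.of_comp.injOn ((hfin x).inter_of_left A)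
    · rintro ⟨hxk, hxS⟩
      have hcard : ({y | (x, y) ∈ G} ∩ A).ncard = k := by
        simp only [S, mem_ofPred_eq] at hxk hxS
        omega
      obtain ⟨v, hv, hvF⟩ :=
        exists_strictMono_comp_of_ncard_eq he_inj.injOn ((hfin x).inter_of_left A) hcard
      exact ⟨(x, v), ⟨⟨hv, hvF⟩, hxS⟩, rfl⟩
  have hsplit : {x | k ≤ ({y | (x, y) ∈ G} ∩ A).ncard} = Prod.fst '' T ∪ S := by
    rw [himg, sdiff_union_of_subset]
    exact fun x hx => Nat.le_of_succ_le hx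
  rw [hsplit]
  exact (hT.image_of_measurable_injOn measurable_fst hinj).union hk

theorem measurableSet_exists_mem_adj [StandardBorelSpace X] (hG : MeasurableSet G)
    (hfin : ∀ x, {y | (x, y) ∈ G}.Finite) {d : ℕ} (hdeg : ∀ x, {y | (x, y) ∈ G}.ncard ≤ d)
    (hA : MeasurableSet A) : MeasurableSet {x | ∃ y ∈ A, (x, y) ∈ G} := by
  obtain ⟨e, he⟩ := exists_measurableEmbedding_real X
  have hmax : MeasurableSet {x | d + 1 ≤ ({y | (x, y) ∈ G} ∩ A).ncard} := by
    convert MeasurableSet.empty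
    refine eq_empty_of_forall_notMem fun x hx => ?_
    have hle : ({y | (x, y) ∈ G} ∩ A).ncard ≤ d :=
      (ncard_le_ncard inter_subset_left (hfin x)).trans (hdeg x)
    exact Nat.not_succ_le_self d (hx.trans hle)
  have hone : MeasurableSet {x | 1 ≤ ({y | (x, y) ∈ G} ∩ A).ncard} :=
    Nat.decreasingInduction
      (motive := fun k _ => MeasurableSet {x | k ≤ ({y | (x, y) ∈ G} ∩ A).ncard})
      (fun _ _ hk => measurableSet_le_ncard_inter_of_succ he.measurable he.injective hG hfin hA hk)
      hmax (Nat.le_add_left 1 d)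
  convert hone using 1
  ext x
  rw [mem_ofPred_eq, mem_ofPred_eq, Nat.one_le_iff_ne_zero, ← Nat.pos_iff_ne_zero,
    ncard_pos ((hfin x).inter_of_left A)]
  exact ⟨fun ⟨y, hyA, hy⟩ => ⟨y, hy, hyA⟩, fun ⟨y, hy, hyA⟩ => ⟨y, hyA, hy⟩⟩

end Neighbourhood

theorem exists_measurable_nat_coloring {X : Type*} [MeasurableSpace X] [StandardBorelSpace X]
    {G : Set (X × X)} (hirr : ∀ x, (x, x) ∉ G) (hfin : ∀ x, {y | (x, y) ∈ G}.Finite)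
    (hnbr : ∀ A, MeasurableSet A → MeasurableSet {x | ∃ y ∈ A, (x, y) ∈ G}) :
    ∃ c : X → ℕ, Measurable c ∧ ∀ x y, (x, y) ∈ G → c x ≠ c y := by
  classical
  obtain ⟨τ, _, _⟩ := ‹StandardBorelSpace X›.polish
  obtain ⟨b, hbc, -, hb⟩ := TopologicalSpace.exists_countable_basis X
  obtain ⟨U, hUb, hbU⟩ : ∃ U : ℕ → Set X, range U ⊆ insert ∅ b ∧ b ⊆ range U :=
    ⟨_, range_enumerateCountable_subset hbc ∅, subset_range_enumerate hbc ∅⟩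
  have hU : ∀ n, MeasurableSet (U n) := by
    intro n
    rcases hUb (mem_range_self n) with h | h
    · exact h ▸ .empty
    · exact (hb.isOpen h).measurableSet
  have hsep : ∀ x, ∃ n, x ∈ U n ∧ ∀ y, (x, y) ∈ G → y ∉ U n := by
    intro x
    obtain ⟨V, hVb, hxV, hVG⟩ :=
      hb.exists_subset_of_mem_open (hirr x) (hfin x).isClosed.isOpen_compl
    obtain ⟨n, rfl⟩ := hbU hVb
    exact ⟨n, hxV, fun y hy hyV => hVG hyV hy⟩
  refine ⟨fun x => Nat.find (hsep x), measurable_find hsep fun n => ?_,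
    fun x y hxy (hc : Nat.find (hsep x) = Nat.find (hsep y)) => ?_⟩
  · convert (hU n).diff (hnbr _ (hU n)) using 1
    ext x
    simp only [mem_ofPred_eq, mem_sdiff, not_exists, not_and]
    exact and_congr_right fun _ => forall_congr' fun y => imp_not_comm
  · have hx := (Nat.find_spec (hsep x)).2 y hxy
    rw [hc] at hx
    exact hx (Nat.find_spec (hsep y)).1

-- `sInf ∅ = ⊤` is never used: at most `d` of the `d + 1` colours are taken by neighbours.
noncomputable def greedyColoring {X : Type*} (G : Set (X × X)) (c₀ : X → ℕ) (d : ℕ) (x : X) :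
    Fin (d + 1) :=
  sInf {i | ∀ y, (x, y) ∈ G → ∀ _ : c₀ y < c₀ x, greedyColoring G c₀ d y ≠ i}
termination_by c₀ x

section GreedyColoring

variable {X : Type*} (G : Set (X × X)) (c₀ : X → ℕ) (d : ℕ)

theorem greedyColoring_eq (x : X) :
    greedyColoring G c₀ d x =
      sInf {i | ∀ y, (x, y) ∈ G → c₀ y < c₀ x → greedyColoring G c₀ d y ≠ i} := by
  rw [greedyColoring]

variable {G c₀ d}

theorem greedyColoring_ne_of_lt (hfin : ∀ x, {y | (x, y) ∈ G}.Finite)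
    (hdeg : ∀ x, {y | (x, y) ∈ G}.ncard ≤ d) {x y : X} (hxy : (x, y) ∈ G) (hlt : c₀ y < c₀ x) :
    greedyColoring G c₀ d x ≠ greedyColoring G c₀ d y := by
  obtain ⟨i, hi⟩ : ∃ i, i ∉ greedyColoring G c₀ d '' {y | (x, y) ∈ G} := by
    by_contra! h
    have hcard := (ncard_image_le (f := greedyColoring G c₀ d) (hfin x)).trans (hdeg x)
    rw [eq_univ_of_forall h, ncard_univ, Nat.card_eq_fintype_card, Fintype.card_fin] at hcard
    omega
  have hfree : {i | ∀ y, (x, y) ∈ G → c₀ y < c₀ x → greedyColoring G c₀ d y ≠ i}.Nonempty :=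
    ⟨i, fun y hy _ hyi => hi ⟨y, hy, hyi⟩⟩
  rw [greedyColoring_eq]
  exact (csInf_mem hfree y hxy hlt).symm

theorem measurable_greedyColoring [MeasurableSpace X] (hc₀ : Measurable c₀)
    (hnbr : ∀ A, MeasurableSet A → MeasurableSet {x | ∃ y ∈ A, (x, y) ∈ G}) :
    Measurable (greedyColoring G c₀ d) := by
  set c := greedyColoring G c₀ d
  have hfirst : ∀ n, (∀ i, MeasurableSet {x | c₀ x < n ∧ c x = i}) →
      Measurable fun x => sInf {i | ∀ y, (x, y) ∈ G → c₀ y < n → c y ≠ i} := by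
    refine fun n hn => Measurable.of_discrete.comp (measurable_set_iff.2 fun i => ?_)
    refine measurableSet_setOfPred.1 ?_
    convert (hnbr _ (hn i)).compl using 1
    ext x
    simp only [mem_ofPred_eq, mem_compl_iff, not_exists, not_and]
    exact forall_congr' fun y => by tauto
  have hbelow : ∀ n i, MeasurableSet {x | c₀ x < n ∧ c x = i} := by
    intro n
    induction n with
    | zero => simp
    | succ n ih =>
      intro i
      convert (ih i).union ((hc₀ (measurableSet_singleton n)).inter
        (hfirst n ih (measurableSet_singleton i))) using 1
      ext x
      simp only [mem_ofPred_eq, mem_union, mem_inter_iff, mem_preimage, mem_singleton_iff]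
      constructor
      · rintro ⟨hlt, rfl⟩
        rcases Nat.lt_succ_iff_lt_or_eq.1 hlt with hlt | rfl
        · exact .inl ⟨hlt, rfl⟩
        · exact .inr ⟨rfl, (greedyColoring_eq G c₀ d x).symm⟩
      · rintro (⟨hlt, rfl⟩ | ⟨rfl, rfl⟩)
        · exact ⟨hlt.trans (Nat.lt_succ_self _), rfl⟩
        · exact ⟨Nat.lt_succ_self _, greedyColoring_eq G c₀ d x⟩
  refine measurable_to_countable' fun i => ?_
  convert MeasurableSet.iUnion fun n => hbelow n i using 1
  ext x
  simp only [mem_preimage, mem_singleton_iff, mem_iUnion, mem_ofPred_eq]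
  exact ⟨fun h => ⟨c₀ x + 1, Nat.lt_succ_self _, h⟩, fun ⟨_, _, h⟩ => h⟩

end GreedyColoring

/-- **Kechris–Solecki–Todorcevic.** Every Borel graph (an irreflexive symmetric Borel subset
of `X × X`) on a standard Borel space with all degrees bounded by `d` has a Borel
`(d+1)`-coloring. -/
theorem stmt3 {X : Type*} [MeasurableSpace X] [StandardBorelSpace X]
    (G : Set (X × X)) (hG : MeasurableSet G)
    (hirr : ∀ x : X, (x, x) ∉ G)
    (hsym : ∀ x y : X, (x, y) ∈ G → (y, x) ∈ G)
    (d : ℕ)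
    (hfin : ∀ x : X, {y | (x, y) ∈ G}.Finite)
    (hdeg : ∀ x : X, {y | (x, y) ∈ G}.ncard ≤ d) :
    ∃ c : X → Fin (d + 1), Measurable c ∧ ∀ x y : X, (x, y) ∈ G → c x ≠ c y := by
  have hnbr : ∀ A, MeasurableSet A → MeasurableSet {x | ∃ y ∈ A, (x, y) ∈ G} :=
    fun A hA => measurableSet_exists_mem_adj hG hfin hdeg hA
  obtain ⟨c₀, hc₀, hc₀G⟩ := exists_measurable_nat_coloring hirr hfin hnbr
  refine ⟨greedyColoring G c₀ d, measurable_greedyColoring hc₀ hnbr, fun x y hxy => ?_⟩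
  rcases (hc₀G x y hxy).lt_or_gt with hlt | hlt
  · exact (greedyColoring_ne_of_lt hfin hdeg (hsym x y hxy) hlt).symm
  · exact greedyColoring_ne_of_lt hfin hdeg hxy hlt
end

section
/- Let G be a countable amenable group acting freely on a set X. Let K, W ⊆ G be finite, let ε, δ > 0, let C ⊆ X, and for each c ∈ C let F_c ⊆ W be a (K, δ(1−ε))-invariant finite set. If the collection {F_c c : c ∈ C} is ε-disjoint and A = ⋃_{c∈C} F_c c has positive lower Banach density, then A is (K, δ)*-invariant. -/
/-!
The symmetric difference `KA △ A` is covered by the translates `(KF_c △ F_c) c`. In a window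
`Φ = F₂ x`, a tile whose disjoint core `F'_c c` lies inside `Φ` contributes
`|KF_c △ F_c| < δ (1 - ε) |F_c| ≤ δ β |F'_c|` with one `β < 1` for all `c` (only finitely many
pairs `(|F_c|, |F'_c|)` occur since `F_c ⊆ W`), and these cores are disjoint pieces of `A ∩ Φ`.
Every other tile meeting `Φ` sits within a bounded distance of the inner boundary of `Φ`. Taking
`F₂ = F₀ F₁`, where `F₀` witnesses `lBD(A) > 0` with density `α` and `F₁` is very invariant, gives
`|A ∩ Φ| ≥ α |F₁|` while the boundary is an arbitrarily small multiple of `|F₁|`, so it is absorbed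
by the slack `δ (1 - β) |A ∩ Φ|`.
-/

open Set
open scoped Pointwise symmDiff

/-- A nonempty finite set `F ⊆ G` is `(K,δ)`-invariant if `|KF △ F| < δ|F|`. -/
def IsInv {G : Type*} [Group G] (K F : Finset G) (δ : ℝ) : Prop :=
  F.Nonempty ∧ ((((K : Set G) * (F : Set G)) ∆ (F : Set G)).ncard : ℝ) < δ * F.card

/-- The lower Banach density of `A ⊆ X` with respect to a free action `G ↷ X`:
`lBD(A) = sup_F inf_x |A ∩ Fx| / |F|` over nonempty finite `F ⊆ G`. -/
noncomputable def lBD (G : Type*) [Group G] {X : Type*} [MulAction G X] (A : Set X) : ℝ :=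
  ⨆ (F : Finset G) (_ : F.Nonempty), ⨅ x : X,
    ((A ∩ (fun g : G => g • x) '' (F : Set G)).ncard : ℝ) / F.card

/-- `A ⊆ X` is `(K,δ)*`-invariant if there is a nonempty finite `F ⊆ G` with
`|(KA △ A) ∩ Fx| < δ|A ∩ Fx|` for all `x ∈ X`. -/
def StarInv {G : Type*} [Group G] {X : Type*} [MulAction G X]
    (K : Finset G) (δ : ℝ) (A : Set X) : Prop :=
  ∃ F : Finset G, F.Nonempty ∧ ∀ x : X,
    (((((K : Set G) • A) ∆ A) ∩ (fun g : G => g • x) '' (F : Set G)).ncard : ℝ)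
      < δ * ((A ∩ (fun g : G => g • x) '' (F : Set G)).ncard : ℝ)

/-- The collection `{F_c c : c ∈ C}` is `ε`-disjoint: for each `c ∈ C` there is
`F'_c ⊆ F_c` with `|F'_c| > (1-ε)|F_c|` such that the sets `F'_c c`, `c ∈ C`, are pairwise
disjoint. -/
def EpsDisjoint {G : Type*} [Group G] {X : Type*} [MulAction G X]
    (ε : ℝ) (C : Set X) (F : X → Finset G) : Prop :=
  ∃ F' : X → Finset G,
    (∀ c ∈ C, F' c ⊆ F c ∧ (1 - ε) * ((F c).card : ℝ) < ((F' c).card : ℝ)) ∧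
    ∀ c ∈ C, ∀ c' ∈ C, c ≠ c' →
      Disjoint ((fun g : G => g • c) '' ((F' c : Set G)))
        ((fun g : G => g • c') '' ((F' c' : Set G)))

open scoped Finset

section

variable {G X : Type*} [Group G] [MulAction G X]

def unionTiles (C : Set X) (F : X → Finset G) : Set X :=
  ⋃ c ∈ C, (fun g : G => g • c) '' (F c : Set G)

def innerBoundary [DecidableEq X] (V : Finset G) (Φ : Finset X) : Finset X :=
  {y ∈ Φ | ∃ v ∈ V, v • y ∉ Φ}

lemma injective_smul_of_free (hfree : ∀ g : G, g ≠ 1 → ∀ x : X, g • x ≠ x) (x : X) :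
    Function.Injective (fun g : G => g • x) := by
  intro g h hgh
  by_contra hne
  refine hfree (h⁻¹ * g) (fun h1 => hne (inv_mul_eq_one.mp h1).symm) x ?_
  simp only at hgh
  rw [mul_smul, hgh, inv_smul_smul]

lemma IsInv.card_symmDiff_lt [DecidableEq G] {K F : Finset G} {δ : ℝ} (h : IsInv K F δ) :
    (#((K * F) ∆ F) : ℝ) < δ * #F := by
  have h2 := h.2
  rwa [← Finset.coe_mul, ← Finset.coe_symmDiff, Set.ncard_coe_finset] at h2

lemma ncard_inter_image_eq_card_filter {x : X} (hinj : Function.Injective (fun g : G => g • x))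
    (A : Set X) [DecidablePred (· ∈ A)] (F : Finset G) :
    (A ∩ (fun g : G => g • x) '' ↑F).ncard = #{g ∈ F | g • x ∈ A} := by
  rw [← Set.ncard_coe_finset, Finset.coe_filter, ← Set.ncard_image_of_injective _ hinj]
  congr 1
  ext y
  simp only [Set.mem_inter_iff, Set.mem_image, Finset.mem_coe, Set.mem_ofPred_eq]
  constructor
  · rintro ⟨hy, g, hg, rfl⟩
    exact ⟨g, ⟨hg, hy⟩, rfl⟩
  · rintro ⟨g, ⟨hg, hy⟩, rfl⟩
    exact ⟨hy, g, hg, rfl⟩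

lemma mul_le_card_mul_ncard_inter_image_mul [DecidableEq G]
    (hinj : ∀ x : X, Function.Injective (fun g : G => g • x)) {A : Set X} {F₀ : Finset G} {m : ℝ}
    (hm : ∀ y : X, m ≤ (A ∩ (fun g : G => g • y) '' ↑F₀).ncard) (F₁ : Finset G) (x : X) :
    #F₁ * m ≤ #F₀ * (A ∩ (fun g : G => g • x) '' ↑(F₀ * F₁)).ncard := by
  classical
  let P : Finset (G × G) := {p ∈ F₀ ×ˢ F₁ | (p.1 * p.2) • x ∈ A}
  have hP : ∑ f ∈ F₁, #{h ∈ F₀ | (h * f) • x ∈ A} = #P := by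
    simp only [P, Finset.card_filter, Finset.sum_product_right]
  have hPle : #P ≤ #F₀ * #{g ∈ F₀ * F₁ | g • x ∈ A} := by
    rw [← Finset.card_product]
    refine Finset.card_le_card_of_injOn (fun p => (p.1, p.1 * p.2)) (fun p hp => ?_) ?_
    · simp only [P, Finset.coe_filter, Finset.mem_product, Set.mem_ofPred_eq] at hp
      simp only [Finset.coe_product, Finset.coe_filter, Set.mem_prod, Finset.mem_coe,
        Set.mem_ofPred_eq]
      exact ⟨hp.1.1, Finset.mul_mem_mul hp.1.1 hp.1.2, hp.2⟩
    · rintro ⟨h, f⟩ - ⟨h', f'⟩ - hpq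
      simp only [Prod.mk.injEq] at hpq
      obtain ⟨rfl, hf⟩ := hpq
      rw [mul_left_cancel hf]
  rw [ncard_inter_image_eq_card_filter (hinj x)]
  calc (#F₁ : ℝ) * m = ∑ _f ∈ F₁, m := by rw [Finset.sum_const, nsmul_eq_mul]
    _ ≤ ∑ f ∈ F₁, (#{h ∈ F₀ | (h * f) • x ∈ A} : ℝ) := Finset.sum_le_sum fun f _ => by
        simpa only [ncard_inter_image_eq_card_filter (hinj _), mul_smul] using hm (f • x)
    _ ≤ #F₀ * #{g ∈ F₀ * F₁ | g • x ∈ A} := by exact_mod_cast hP ▸ hPle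

lemma exists_lt_one_forall_mul_le_mul {ι : Type*} {s : Set ι} {a b : ι → ℕ} {N : ℕ}
    (ha : ∀ i ∈ s, a i ≤ N) (hb : ∀ i ∈ s, b i ≤ N) {r : ℝ} (h : ∀ i ∈ s, r * a i < b i) :
    ∃ β : ℝ, 0 ≤ β ∧ β < 1 ∧ ∀ i ∈ s, r * a i ≤ β * b i := by
  let T : Finset ℝ := insert 0 ((({p ∈ Finset.range (N + 1) ×ˢ Finset.range (N + 1) |
    r * p.1 < p.2}).image fun p : ℕ × ℕ => r * p.1 / p.2))
  have hT : T.Nonempty := Finset.insert_nonempty _ _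
  refine ⟨T.max' hT, T.le_max' 0 (Finset.mem_insert_self _ _), ?_, fun i hi => ?_⟩
  · refine (T.max'_lt_iff hT).mpr fun t ht => ?_
    rcases Finset.mem_insert.mp ht with rfl | ht
    · exact one_pos
    obtain ⟨⟨p₁, p₂⟩, hp, rfl⟩ := Finset.mem_image.mp ht
    have hlt := (Finset.mem_filter.mp hp).2
    rcases (Nat.cast_nonneg p₂ : (0 : ℝ) ≤ p₂).eq_or_lt with h0 | h0
    · simp [← h0]
    · exact (div_lt_one h0).mpr hlt
  · rcases (Nat.cast_nonneg (b i) : (0 : ℝ) ≤ b i).eq_or_lt with h0 | h0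
    · rw [← h0, mul_zero]
      exact (h i hi).le.trans h0.ge
    have hmem : r * a i / b i ∈ T := Finset.mem_insert_of_mem <| Finset.mem_image.mpr
      ⟨(a i, b i), Finset.mem_filter.mpr ⟨Finset.mem_product.mpr
        ⟨Finset.mem_range_succ_iff.mpr (ha i hi), Finset.mem_range_succ_iff.mpr (hb i hi)⟩,
        h i hi⟩, rfl⟩
    calc r * a i = r * a i / b i * b i := (div_mul_cancel₀ _ h0.ne').symm
      _ ≤ T.max' hT * b i := mul_le_mul_of_nonneg_right (T.le_max' _ hmem) h0.le

lemma innerBoundary_image_subset [DecidableEq G] [DecidableEq X] (V F : Finset G) (x : X) :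
    innerBoundary V (F.image (· • x)) ⊆ (innerBoundary V F).image (· • x) := by
  intro y hy
  simp only [innerBoundary, Finset.mem_filter, Finset.mem_image] at hy ⊢
  obtain ⟨⟨g, hg, rfl⟩, v, hv, hvy⟩ := hy
  exact ⟨g, ⟨hg, v, hv, fun hvg => hvy ⟨v • g, hvg, smul_assoc v g x⟩⟩, rfl⟩

lemma card_innerBoundary_le [DecidableEq G] [DecidableEq X] (V : Finset G) (Φ : Finset X) :
    #(innerBoundary V Φ) ≤ #V * #(V • Φ \ Φ) := by
  have hsub : innerBoundary V Φ ⊆ V⁻¹ • (V • Φ \ Φ) := by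
    intro y hy
    obtain ⟨hyΦ, v, hv, hvy⟩ := Finset.mem_filter.mp hy
    exact Finset.mem_smul.mpr ⟨v⁻¹, Finset.inv_mem_inv hv, v • y,
      Finset.mem_sdiff.mpr ⟨Finset.smul_mem_smul hv hyΦ, hvy⟩, inv_smul_smul v y⟩
  calc #(innerBoundary V Φ) ≤ #(V⁻¹ • (V • Φ \ Φ)) := Finset.card_le_card hsub
    _ ≤ #V⁻¹ * #(V • Φ \ Φ) := Finset.card_smul_le
    _ = #V * #(V • Φ \ Φ) := by rw [Finset.card_inv]

lemma card_smul_mul_sdiff_le [DecidableEq G] (V : Finset G) {F₀ : Finset G} {h₀ : G}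
    (h₀F₀ : h₀ ∈ F₀) (F₁ : Finset G) :
    #(V • (F₀ * F₁) \ (F₀ * F₁)) ≤ #((F₀⁻¹ * V * F₀ * F₁) \ F₁) := by
  refine Finset.card_le_card_of_injOn (h₀⁻¹ * ·) (fun g hg => ?_)
    (fun g _ g' _ h => mul_left_cancel h)
  obtain ⟨hgV, hgF⟩ := Finset.mem_sdiff.mp hg
  obtain ⟨v, hv, _, hhf, rfl⟩ := Finset.mem_smul.mp hgV
  obtain ⟨h, hh, f, hf, rfl⟩ := Finset.mem_mul.mp hhf
  refine Finset.mem_sdiff.mpr ⟨Finset.mem_mul.mpr ⟨h₀⁻¹ * v * h, ?_, f, hf, ?_⟩, fun hmem => ?_⟩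
  · exact Finset.mul_mem_mul (Finset.mul_mem_mul (Finset.inv_mem_inv h₀F₀) hv) hh
  · simp only [smul_eq_mul, mul_assoc]
  · exact hgF (by simpa using Finset.mul_mem_mul h₀F₀ hmem)

lemma exists_forall_mul_card_le_ncard_of_lBD_pos {A : Set X} (hA : 0 < lBD G A) :
    ∃ F₀ : Finset G, F₀.Nonempty ∧ ∃ α : ℝ, 0 < α ∧
      ∀ x : X, α * #F₀ ≤ ((A ∩ (fun g : G => g • x) '' ↑F₀).ncard : ℝ) := by
  obtain ⟨F₀, hF₀, hinf⟩ : ∃ F₀ : Finset G, F₀.Nonempty ∧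
      0 < ⨅ x : X, ((A ∩ (fun g : G => g • x) '' ↑F₀).ncard : ℝ) / #F₀ := by
    by_contra! h
    exact hA.not_ge (Real.iSup_le (fun F => Real.iSup_le (h F) le_rfl) le_rfl)
  refine ⟨F₀, hF₀, _, hinf, fun x => ?_⟩
  rw [← le_div_iff₀ (by exact_mod_cast hF₀.card_pos)]
  exact ciInf_le ⟨0, by rintro _ ⟨y, rfl⟩; positivity⟩ x

theorem exists_finset_mul_card_innerBoundary_lt [DecidableEq G] [DecidableEq X]
    (hinj : ∀ x : X, Function.Injective (fun g : G => g • x))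
    (hAm : ∀ (K : Finset G) (δ : ℝ), 0 < δ → ∃ F : Finset G, IsInv K F δ)
    {A : Set X} (hA : 0 < lBD G A) (V : Finset G) (κ : ℝ) :
    ∃ F : Finset G, F.Nonempty ∧ ∀ x : X,
      κ * #(innerBoundary V (F.image (· • x))) < (A ∩ (fun g : G => g • x) '' ↑F).ncard := by
  obtain ⟨F₀, hF₀, α, hα, hdens⟩ := exists_forall_mul_card_le_ncard_of_lBD_pos hA
  obtain ⟨h₀, h₀F₀⟩ := hF₀
  set η := α / (|κ| * #V + 1)
  have hη : 0 < η := by positivity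
  have hκη : |κ| * #V * η < α := calc
    |κ| * #V * η < (|κ| * #V + 1) * η := by linarith
    _ = α := mul_div_cancel₀ α (by positivity)
  obtain ⟨F₁, hF₁⟩ := hAm (F₀⁻¹ * V * F₀) η hη
  refine ⟨F₀ * F₁, Finset.Nonempty.mul ⟨h₀, h₀F₀⟩ hF₁.1, fun x => ?_⟩
  have hbd : (#(innerBoundary V ((F₀ * F₁).image (· • x))) : ℝ) ≤ #V * (η * #F₁) := by
    have hsdiff : (#((F₀⁻¹ * V * F₀ * F₁) \ F₁) : ℝ) < η * #F₁ :=
      (Nat.cast_le.mpr (Finset.card_le_card (by rw [symmDiff_def]; exact le_sup_left))).trans_lt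
        hF₁.card_symmDiff_lt
    calc (#(innerBoundary V ((F₀ * F₁).image (· • x))) : ℝ)
        ≤ #(innerBoundary V (F₀ * F₁)) := by
          exact_mod_cast (Finset.card_le_card (innerBoundary_image_subset V (F₀ * F₁) x)).trans
            Finset.card_image_le
      _ ≤ #V * #(V • (F₀ * F₁) \ (F₀ * F₁)) := by exact_mod_cast card_innerBoundary_le _ _
      _ ≤ #V * #((F₀⁻¹ * V * F₀ * F₁) \ F₁) := by
          exact_mod_cast Nat.mul_le_mul_left _ (card_smul_mul_sdiff_le V h₀F₀ F₁)
      _ ≤ #V * (η * #F₁) := mul_le_mul_of_nonneg_left hsdiff.le (Nat.cast_nonneg _)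
  have hdensx : α * #F₁ ≤ ((A ∩ (fun g : G => g • x) '' ↑(F₀ * F₁)).ncard : ℝ) := by
    refine le_of_mul_le_mul_left ?_ (Nat.cast_pos.mpr (Finset.card_pos.mpr ⟨h₀, h₀F₀⟩))
    linarith [mul_le_card_mul_ncard_inter_image_mul hinj hdens F₁ x]
  calc κ * #(innerBoundary V ((F₀ * F₁).image (· • x)))
      ≤ |κ| * #(innerBoundary V ((F₀ * F₁).image (· • x))) :=
        mul_le_mul_of_nonneg_right (le_abs_self κ) (Nat.cast_nonneg _)
    _ ≤ |κ| * (#V * (η * #F₁)) := mul_le_mul_of_nonneg_left hbd (abs_nonneg κ)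
    _ = |κ| * #V * η * #F₁ := by ring
    _ < α * #F₁ := mul_lt_mul_of_pos_right hκη (Nat.cast_pos.mpr hF₁.1.card_pos)
    _ ≤ _ := hdensx

lemma mem_unionTiles {C : Set X} {F : X → Finset G} {y : X} :
    y ∈ unionTiles C F ↔ ∃ c ∈ C, ∃ g ∈ F c, g • c = y := by
  simp [unionTiles]

lemma symmDiff_smul_unionTiles_subset [DecidableEq G] (K : Finset G) (C : Set X)
    (F : X → Finset G) :
    ((K : Set G) • unionTiles C F) ∆ unionTiles C F ⊆
      unionTiles C (fun c => (K * F c) ∆ F c) := by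
  intro y hy
  rcases Set.mem_symmDiff.mp hy with ⟨hyK, hyA⟩ | ⟨hyA, hyK⟩
  · obtain ⟨k, hk, a, ha, rfl⟩ := Set.mem_smul.mp hyK
    obtain ⟨c, hc, f, hf, rfl⟩ := mem_unionTiles.mp ha
    refine mem_unionTiles.mpr ⟨c, hc, k * f, Finset.mem_symmDiff.mpr (Or.inl
      ⟨Finset.mul_mem_mul hk hf, fun hkf => hyA ?_⟩), mul_smul k f c⟩
    exact mem_unionTiles.mpr ⟨c, hc, k * f, hkf, mul_smul k f c⟩
  · obtain ⟨c, hc, f, hf, rfl⟩ := mem_unionTiles.mp hyA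
    refine mem_unionTiles.mpr ⟨c, hc, f, Finset.mem_symmDiff.mpr (Or.inr
      ⟨hf, fun hKf => hyK ?_⟩), rfl⟩
    obtain ⟨k, hk, f', hf', rfl⟩ := Finset.mem_mul.mp hKf
    exact Set.mem_smul.mpr
      ⟨k, hk, f' • c, mem_unionTiles.mpr ⟨c, hc, f', hf', rfl⟩, (mul_smul k f' c).symm⟩

lemma sum_card_le_ncard_unionTiles_inter [DecidableEq X]
    (hinj : ∀ x : X, Function.Injective (fun g : G => g • x)) {C : Set X} {F F' : X → Finset G}
    (hF' : ∀ c ∈ C, F' c ⊆ F c)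
    (hdisj : C.PairwiseDisjoint fun c => (fun g : G => g • c) '' ↑(F' c))
    {I Φ : Finset X} (hIC : ↑I ⊆ C) (hIΦ : ∀ c ∈ I, (F' c).image (· • c) ⊆ Φ) :
    ∑ c ∈ I, #(F' c) ≤ (unionTiles C F ∩ ↑Φ).ncard := by
  have hdisj' : (I : Set X).PairwiseDisjoint fun c => (F' c).image (· • c) :=
    fun c hc c' hc' hne => Finset.disjoint_coe.mp <| by
      simpa only [Finset.coe_image] using hdisj (hIC hc) (hIC hc') hne
  have hsub : ↑(I.biUnion fun c => (F' c).image (· • c)) ⊆ unionTiles C F ∩ ↑Φ := by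
    intro y hy
    obtain ⟨c, hc, hyc⟩ := Finset.mem_biUnion.mp (Finset.mem_coe.mp hy)
    obtain ⟨f, hf, rfl⟩ := Finset.mem_image.mp hyc
    exact ⟨mem_unionTiles.mpr ⟨c, hIC hc, f, hF' c (hIC hc) hf, rfl⟩, hIΦ c hc hyc⟩
  calc ∑ c ∈ I, #(F' c) = ∑ c ∈ I, #((F' c).image (· • c)) :=
        Finset.sum_congr rfl fun c _ => (Finset.card_image_of_injective _ (hinj c)).symm
    _ = #(I.biUnion fun c => (F' c).image (· • c)) := (Finset.card_biUnion hdisj').symm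
    _ ≤ (unionTiles C F ∩ ↑Φ).ncard := by
        rw [← Set.ncard_coe_finset]
        exact Set.ncard_le_ncard hsub (Φ.finite_toSet.inter_of_right _)

lemma mem_inv_smul_innerBoundary [DecidableEq G] [DecidableEq X] {S : Finset G} {Φ : Finset X}
    {c : X} {d f : G} (hd : d ∈ S) (hf : f ∈ S) (hdc : d • c ∈ Φ) (hfc : f • c ∉ Φ) :
    c ∈ S⁻¹ • innerBoundary (S * S⁻¹) Φ :=
  Finset.mem_smul.mpr ⟨d⁻¹, Finset.inv_mem_inv hd, d • c, Finset.mem_filter.mpr ⟨hdc, f * d⁻¹,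
    Finset.mul_mem_mul hf (Finset.inv_mem_inv hd), by rwa [mul_smul, inv_smul_smul]⟩,
    inv_smul_smul d c⟩

lemma exists_ncard_symmDiff_smul_unionTiles_inter_le_sum [DecidableEq G] [DecidableEq X]
    {K S : Finset G} {C : Set X} {F : X → Finset G} (hDS : ∀ c ∈ C, (K * F c) ∆ F c ⊆ S)
    (Φ : Finset X) :
    ∃ I : Finset X, (∀ c ∈ I, c ∈ C ∧ ∃ d ∈ (K * F c) ∆ F c, d • c ∈ Φ) ∧
      ((((K : Set G) • unionTiles C F) ∆ unionTiles C F) ∩ ↑Φ).ncard ≤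
        ∑ c ∈ I, #((K * F c) ∆ F c) := by
  classical
  set D : X → Finset G := fun c => (K * F c) ∆ F c
  refine ⟨{c ∈ S⁻¹ • Φ | c ∈ C ∧ ∃ d ∈ D c, d • c ∈ Φ}, fun c hc => (Finset.mem_filter.mp hc).2,
    ?_⟩
  have hcover : (((K : Set G) • unionTiles C F) ∆ unionTiles C F) ∩ ↑Φ ⊆
      ↑({c ∈ S⁻¹ • Φ | c ∈ C ∧ ∃ d ∈ D c, d • c ∈ Φ}.biUnion fun c => (D c).image (· • c)) := by
    rintro y ⟨hy, hyΦ⟩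
    obtain ⟨c, hc, d, hd, rfl⟩ := mem_unionTiles.mp (symmDiff_smul_unionTiles_subset K C F hy)
    refine Finset.mem_coe.mpr (Finset.mem_biUnion.mpr ⟨c, Finset.mem_filter.mpr
      ⟨Finset.mem_smul.mpr ⟨d⁻¹, Finset.inv_mem_inv (hDS c hc hd), d • c, hyΦ, inv_smul_smul d c⟩,
        hc, d, hd, hyΦ⟩, Finset.mem_image_of_mem _ hd⟩)
  refine (Set.ncard_le_ncard hcover (Finset.finite_toSet _)).trans ?_
  rw [Set.ncard_coe_finset]
  exact Finset.card_biUnion_le.trans (Finset.sum_le_sum fun c _ => Finset.card_image_le)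

theorem ncard_symmDiff_smul_unionTiles_inter_le [DecidableEq G] [DecidableEq X]
    (hinj : ∀ x : X, Function.Injective (fun g : G => g • x)) {K W : Finset G} {C : Set X}
    {F F' : X → Finset G} (hFW : ∀ c ∈ C, F c ⊆ W) (hF' : ∀ c ∈ C, F' c ⊆ F c)
    (hdisj : C.PairwiseDisjoint fun c => (fun g : G => g • c) '' ↑(F' c))
    {θ : ℝ} (hθ : 0 ≤ θ) (hD : ∀ c ∈ C, (#((K * F c) ∆ F c) : ℝ) ≤ θ * #(F' c)) (Φ : Finset X) :
    (((((K : Set G) • unionTiles C F) ∆ unionTiles C F) ∩ ↑Φ).ncard : ℝ) ≤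
      θ * (unionTiles C F ∩ ↑Φ).ncard + #(insert 1 K * W) ^ 2 *
        #(innerBoundary (insert 1 K * W * (insert 1 K * W)⁻¹) Φ) := by
  set S := insert 1 K * W
  set D : X → Finset G := fun c => (K * F c) ∆ F c
  have hFS : ∀ c ∈ C, F c ⊆ S := fun c hc g hg =>
    Finset.mem_mul.mpr ⟨1, Finset.mem_insert_self 1 K, g, hFW c hc hg, one_mul g⟩
  have hDS : ∀ c ∈ C, D c ⊆ S := fun c hc g hg => by
    rcases Finset.mem_symmDiff.mp hg with ⟨h, -⟩ | ⟨h, -⟩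
    · exact Finset.mul_subset_mul (Finset.subset_insert 1 K) (hFW c hc) h
    · exact hFS c hc h
  obtain ⟨I, hI, hcover⟩ := exists_ncard_symmDiff_smul_unionTiles_inter_le_sum hDS Φ
  -- A tile whose disjoint core lies in `Φ` is paid for by that core, a part of `A ∩ Φ`; any
  -- other tile meets `Φ` and its complement within `S`, so it is `S`-close to the inner boundary.
  let good : Finset X := {c ∈ I | (F' c).image (· • c) ⊆ Φ}
  let bad : Finset X := {c ∈ I | ¬ (F' c).image (· • c) ⊆ Φ}
  have hgood : ∑ c ∈ good, (#(D c) : ℝ) ≤ θ * (unionTiles C F ∩ ↑Φ).ncard := calc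
    ∑ c ∈ good, (#(D c) : ℝ) ≤ ∑ c ∈ good, θ * #(F' c) :=
        Finset.sum_le_sum fun c hc => hD c (hI c (Finset.mem_filter.mp hc).1).1
    _ = θ * ∑ c ∈ good, (#(F' c) : ℝ) := (Finset.mul_sum _ _ _).symm
    _ ≤ θ * (unionTiles C F ∩ ↑Φ).ncard := mul_le_mul_of_nonneg_left (by
        exact_mod_cast sum_card_le_ncard_unionTiles_inter hinj hF' hdisj
          (fun c hc => (hI c (Finset.mem_filter.mp hc).1).1)
          (fun c hc => (Finset.mem_filter.mp hc).2)) hθ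
  have hbad_sub : bad ⊆ S⁻¹ • innerBoundary (S * S⁻¹) Φ := by
    intro c hc
    obtain ⟨hcI, hnot⟩ := Finset.mem_filter.mp hc
    obtain ⟨hcC, d, hd, hdc⟩ := hI c hcI
    obtain ⟨_, hz, hzΦ⟩ := Finset.not_subset.mp hnot
    obtain ⟨f, hf, rfl⟩ := Finset.mem_image.mp hz
    exact mem_inv_smul_innerBoundary (hDS c hcC hd) (hFS c hcC (hF' c hcC hf)) hdc hzΦ
  have hbad : ∑ c ∈ bad, #(D c) ≤ #S ^ 2 * #(innerBoundary (S * S⁻¹) Φ) := calc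
    ∑ c ∈ bad, #(D c) ≤ ∑ _c ∈ bad, #S := Finset.sum_le_sum fun c hc =>
        Finset.card_le_card (hDS c (hI c (Finset.mem_filter.mp hc).1).1)
    _ = #bad * #S := by rw [Finset.sum_const, smul_eq_mul]
    _ ≤ #S⁻¹ * #(innerBoundary (S * S⁻¹) Φ) * #S :=
        Nat.mul_le_mul_right _ ((Finset.card_le_card hbad_sub).trans Finset.card_smul_le)
    _ = #S ^ 2 * #(innerBoundary (S * S⁻¹) Φ) := by rw [Finset.card_inv]; ring
  calc (((((K : Set G) • unionTiles C F) ∆ unionTiles C F) ∩ ↑Φ).ncard : ℝ)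
      ≤ ∑ c ∈ I, (#(D c) : ℝ) := by exact_mod_cast hcover
    _ = ∑ c ∈ good, (#(D c) : ℝ) + ∑ c ∈ bad, (#(D c) : ℝ) :=
        (Finset.sum_filter_add_sum_filter_not _ _ _).symm
    _ ≤ _ := add_le_add hgood (by exact_mod_cast hbad)

end

theorem stmt6_general {G : Type*} [Group G] {X : Type*} [MulAction G X]
    (hfree : ∀ g : G, g ≠ 1 → ∀ x : X, g • x ≠ x)
    (hAm : ∀ (K : Finset G) (δ : ℝ), 0 < δ → ∃ F : Finset G, IsInv K F δ)
    (K W : Finset G) (ε δ : ℝ) (hδ : 0 < δ)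
    (C : Set X) (F : X → Finset G)
    (hFW : ∀ c ∈ C, F c ⊆ W)
    (hFinv : ∀ c ∈ C, IsInv K (F c) (δ * (1 - ε)))
    (hdisj : EpsDisjoint ε C F)
    (hpos : 0 < lBD G (⋃ c ∈ C, (fun g : G => g • c) '' ((F c : Set G)))) :
    StarInv K δ (⋃ c ∈ C, (fun g : G => g • c) '' ((F c : Set G))) := by
  classical
  change 0 < lBD G (unionTiles C F) at hpos
  show StarInv K δ (unionTiles C F)
  obtain ⟨F', hF', hF'disj⟩ := hdisj
  have hinj := injective_smul_of_free hfree
  obtain ⟨β, hβ0, hβ1, hβ⟩ := exists_lt_one_forall_mul_le_mul (a := fun c => #(F c))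
    (fun c hc => Finset.card_le_card (hFW c hc))
    (fun c hc => Finset.card_le_card ((hF' c hc).1.trans (hFW c hc))) (fun c hc => (hF' c hc).2)
  have hD : ∀ c ∈ C, (#((K * F c) ∆ F c) : ℝ) ≤ δ * β * #(F' c) := fun c hc => by
    linarith [(hFinv c hc).card_symmDiff_lt, mul_le_mul_of_nonneg_left (hβ c hc) hδ.le]
  have hδβ : 0 < δ * (1 - β) := mul_pos hδ (sub_pos.mpr hβ1)
  set S := insert 1 K * W
  -- With this weight the boundary term of the tile estimate stays below the slack
  -- `δ (1 - β) |A ∩ Φ|` left by the interior tiles.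
  obtain ⟨F₂, hF₂, hwin⟩ := exists_finset_mul_card_innerBoundary_lt hinj hAm hpos (S * S⁻¹)
    (#S ^ 2 / (δ * (1 - β)))
  refine ⟨F₂, hF₂, fun x => ?_⟩
  have hcore := ncard_symmDiff_smul_unionTiles_inter_le hinj hFW (fun c hc => (hF' c hc).1)
    hF'disj (mul_nonneg hδ.le hβ0) hD (F₂.image (· • x))
  have hwinx := hwin x
  rw [Finset.coe_image] at hcore
  rw [div_mul_eq_mul_div, div_lt_iff₀ hδβ] at hwinx
  linarith

/-- An `ε`-disjoint union of `(K, δ(1-ε))`-invariant translated tiles `F_c c ⊆ Wc` with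
positive lower Banach density is `(K,δ)*`-invariant. -/
theorem stmt6 {G : Type*} [Group G] [Countable G] {X : Type*} [MulAction G X]
    (hfree : ∀ g : G, g ≠ 1 → ∀ x : X, g • x ≠ x)
    (hAm : ∀ (K : Finset G) (δ : ℝ), 0 < δ → ∃ F : Finset G, IsInv K F δ)
    (K W : Finset G) (ε δ : ℝ) (hε : 0 < ε) (hδ : 0 < δ)
    (C : Set X) (F : X → Finset G)
    (hFW : ∀ c ∈ C, F c ⊆ W)
    (hFinv : ∀ c ∈ C, IsInv K (F c) (δ * (1 - ε)))
    (hdisj : EpsDisjoint ε C F)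
    (hpos : 0 < lBD G (⋃ c ∈ C, (fun g : G => g • c) '' ((F c : Set G)))) :
    StarInv K δ (⋃ c ∈ C, (fun g : G => g • c) '' ((F c : Set G))) :=
  stmt6_general hfree hAm K W ε δ hδ C F hFW hFinv hdisj hpos
end

section
/- Let X be a standard Borel space, let G be a countable group, and let G ↷ X be a free Borel action. Let Y ⊆ X be Borel, let T ⊆ G be finite, and let ε ∈ (0, 1/2). Then there is a Borel set C ⊆ X and a Borel function assigning to each c ∈ C a set T_c ⊆ T such that: |T_c| > (1−ε)|T| for every c ∈ C; the sets {T_c c : c ∈ C} are pairwise disjoint and disjoint from Y; Y ∪ ⋃_{c∈C} T_c c = Y ∪ TC; and |(Y ∪ TC) ∩ Tx| ≥ ε|T| for all x ∈ X. -/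
/-!
Colour `X` by a Borel map `col : X → ℕ` that separates every `x` from its translates `g • x`,
`1 ≠ g ∈ T⁻¹T`: a countable basis of a compatible Polish topology provides, around each point, a
Borel set missing its finitely many translates, and `col x` is the least index of such a set.
Then choose the centres greedily, one colour at a time. Starting from `Z₀ = Y`, a point `c` of
colour `n` becomes a centre when fewer than `ε|T|` points of `T c` lie in `Zₙ`; its shape is
`T_c = {t ∈ T | t c ∉ Zₙ}`, and `Zₙ₊₁` adds all these `T_c c` to `Zₙ`. Two centres of one colour
have disjoint `T`-translates, and a shape of an earlier colour lies inside `Zₙ`, which later shapes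
avoid. A point that is not a centre already sees `ε|T|` points of `Zₙ ⊆ Y ∪ TC` in `Tx`; for a
centre, all of `Tx` lies in `TC`.
-/

open Set Function
open scoped Pointwise

section Coloring

variable {G X : Type*} [Group G] [MulAction G X]

lemma injective_smul_left_of_free (hfree : ∀ g : G, g ≠ 1 → ∀ x : X, g • x ≠ x) (x : X) :
    Injective (· • x : G → X) := fun g h hgh => by
  by_contra hne
  exact hfree (h⁻¹ * g) (by rwa [ne_eq, inv_mul_eq_one, eq_comm]) x
    (by simp only [mul_smul, hgh, inv_smul_smul])

variable [TopologicalSpace X] [SecondCountableTopology X] [T1Space X] [MeasurableSpace X]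
  [OpensMeasurableSpace X] [MeasurableConstSMul G X]

theorem exists_measurable_coloring (hfree : ∀ g : G, g ≠ 1 → ∀ x : X, g • x ≠ x)
    (D : Finset G) :
    ∃ col : X → ℕ, Measurable col ∧ ∀ g ∈ D, g ≠ 1 → ∀ x, col (g • x) ≠ col x := by
  classical
  obtain ⟨U, hU⟩ := TopologicalSpace.exists_seq_basis X
  set cell : ℕ → Set X := fun n => U n ∩ ⋂ g ∈ D.erase 1, (g • ·) ⁻¹' (U n)ᶜ
  have mem_cell : ∀ x, ∃ n, x ∈ cell n := by
    intro x
    have hx : x ∈ (((D.erase 1).image (· • x) : Finset X) : Set X)ᶜ := by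
      simpa [eq_comm (a := x)] using fun g _ hg1 => hfree g hg1 x
    obtain ⟨_, ⟨n, rfl⟩, hxn, hsub⟩ :=
      hU.exists_subset_of_mem_open hx (Finset.finite_toSet _).isClosed.isOpen_compl
    refine ⟨n, hxn, mem_iInter₂.2 fun g hg hgx => hsub hgx ?_⟩
    exact Finset.mem_coe.2 (Finset.mem_image_of_mem _ hg)
  have measurableSet_cell : ∀ n, MeasurableSet (cell n) := fun n =>
    (hU.isOpen ⟨n, rfl⟩).measurableSet.inter <| .biInter (Finset.countable_toSet _) fun g _ =>
      (hU.isOpen ⟨n, rfl⟩).measurableSet.compl.preimage (measurable_const_smul g)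
  refine ⟨fun x => Nat.find (mem_cell x), measurable_find mem_cell measurableSet_cell,
    fun g hg hg1 x (hcol : Nat.find (mem_cell (g • x)) = Nat.find (mem_cell x)) => ?_⟩
  have hgx : g • x ∈ cell (Nat.find (mem_cell x)) := hcol ▸ Nat.find_spec (mem_cell (g • x))
  exact mem_iInter₂.1 (Nat.find_spec (mem_cell x)).2 g (Finset.mem_erase.2 ⟨hg1, hg⟩) hgx.1

end Coloring

namespace BorelPacking

open scoped Finset

section Hits

variable {G X : Type*} [Group G] [MulAction G X] (T : Finset G)

open Classical in
noncomputable def hits (Z : Set X) (x : X) : ℕ := #{t ∈ T | t • x ∈ Z}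

open Classical in
noncomputable def missing (Z : Set X) (x : X) : Finset G := {t ∈ T | t • x ∉ Z}

lemma hits_add_card_missing (Z : Set X) (x : X) : hits T Z x + #(missing T Z x) = #T := by
  classical
  rw [hits, missing]
  convert Finset.card_filter_add_card_filter_not (s := T) (fun t => t • x ∈ Z)

lemma hits_mono {Z W : Set X} (h : Z ⊆ W) (x : X) : hits T Z x ≤ hits T W x := by
  classical
  exact Finset.card_le_card (Finset.monotone_filter_right T fun t _ => @h (t • x))

lemma hits_eq_ncard {x : X} (hx : Injective (· • x : G → X)) (W : Set X) :
    hits T W x = (W ∩ (· • x) '' (T : Set G)).ncard := by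
  classical
  rw [inter_comm, ← image_inter_preimage, ncard_image_of_injective _ hx, hits,
    ← ncard_coe_finset, Finset.coe_filter]
  rfl

lemma hits_eq_card {Z : Set X} {x : X} (h : ∀ t ∈ T, t • x ∈ Z) : hits T Z x = #T := by
  classical
  unfold hits
  convert congrArg Finset.card (Finset.filter_true_of_mem h)

lemma missing_subset (Z : Set X) (x : X) : missing T Z x ⊆ T := by
  classical
  exact Finset.filter_subset _ _

lemma disjoint_image_missing (Z : Set X) (x : X) :
    Disjoint ((· • x) '' (missing T Z x : Set G)) Z := by
  classical
  rw [Set.disjoint_left]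
  rintro - ⟨t, ht, rfl⟩
  exact (Finset.mem_filter.1 ht).2

lemma biUnion_image_missing (Z S : Set X) :
    ⋃ c ∈ S, (· • c) '' (missing T Z c : Set G) = ⋃ t ∈ T, t • (S ∩ (t • ·) ⁻¹' Zᶜ) := by
  ext y
  simp only [missing, mem_iUnion, mem_image, Finset.coe_filter, mem_ofPred_eq, mem_smul_set,
    mem_inter_iff, Set.mem_preimage, mem_compl_iff, exists_prop]
  aesop

variable [MeasurableSpace X] [MeasurableConstSMul G X]

lemma measurable_hits {Z : Set X} (hZ : MeasurableSet Z) : Measurable (hits T Z) := by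
  classical
  have : hits T Z = fun x => ∑ t ∈ T, if t • x ∈ Z then 1 else 0 :=
    funext fun x => Finset.card_filter _ _
  rw [this]
  exact Finset.measurable_sum _ fun t _ =>
    Measurable.ite (hZ.preimage (measurable_const_smul t)) measurable_const measurable_const

lemma measurableSet_hits_lt {Z : Set X} (hZ : MeasurableSet Z) (r : ℝ) :
    MeasurableSet {x | (hits T Z x : ℝ) < r} :=
  measurable_hits T hZ (.of_discrete (s := {k : ℕ | (k : ℝ) < r}))

lemma measurableSet_missing_eq {Z : Set X} (hZ : MeasurableSet Z) (S : Finset G) :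
    MeasurableSet {x | missing T Z x = S} := by
  classical
  have : {x | missing T Z x = S} = ⋂ t ∈ T ∪ S, {x | t ∈ missing T Z x ↔ t ∈ S} := by
    ext x
    simp only [mem_ofPred_eq, mem_iInter, Finset.ext_iff]
    refine ⟨fun h t _ => h t, fun h t => (em _).elim (h t) fun ht => iff_of_false ?_ ?_⟩
    · exact fun hm => ht (Finset.mem_union_left _ (missing_subset T Z x hm))
    · exact fun hS => ht (Finset.mem_union_right _ hS)
  rw [this]
  refine .biInter (Finset.countable_toSet _) fun t _ => measurableSet_setOfPred.2 ?_
  simp only [missing, Finset.mem_filter]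
  exact (measurable_const.and
    (measurableSet_setOfPred.1 (hZ.preimage (measurable_const_smul t))).not).iff measurable_const

end Hits

section Layers

variable {G X : Type*} [Group G] [MulAction G X] (T : Finset G) (ε : ℝ) (col : X → ℕ)
  (Y : Set X)

noncomputable def layer : ℕ → Set X
  | 0 => Y
  | n + 1 => layer n ∪ ⋃ c ∈ {c | col c = n ∧ (hits T (layer n) c : ℝ) < ε * #T},
      (· • c) '' (missing T (layer n) c : Set G)

def centers : Set X := {c | (hits T (layer T ε col Y (col c)) c : ℝ) < ε * #T}

noncomputable def shape (c : X) : Finset G := missing T (layer T ε col Y (col c)) c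

lemma layer_mono : Monotone (layer T ε col Y) :=
  monotone_nat_of_le_succ fun _ => subset_union_left

lemma subset_layer (n : ℕ) : Y ⊆ layer T ε col Y n :=
  layer_mono T ε col Y (Nat.zero_le n)

lemma image_shape_subset_layer_succ {c : X} (hc : c ∈ centers T ε col Y) :
    (· • c) '' (shape T ε col Y c : Set G) ⊆ layer T ε col Y (col c + 1) :=
  fun _ hy => Or.inr (mem_biUnion (show c ∈ {c' | col c' = col c ∧ _} from ⟨rfl, hc⟩) hy)

lemma disjoint_image_shape_layer (c : X) :
    Disjoint ((· • c) '' (shape T ε col Y c : Set G)) (layer T ε col Y (col c)) :=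
  disjoint_image_missing T _ c

lemma layer_subset (n : ℕ) :
    layer T ε col Y n ⊆
      Y ∪ ⋃ c ∈ centers T ε col Y, (· • c) '' (shape T ε col Y c : Set G) := by
  induction n with
  | zero => exact subset_union_left
  | succ n ih =>
    refine union_subset ih (iUnion₂_subset ?_)
    rintro c ⟨rfl, hc⟩
    exact fun _ hy => Or.inr (mem_biUnion hc hy)

lemma shape_subset (c : X) : shape T ε col Y c ⊆ T := missing_subset T _ c

lemma lt_card_shape {c : X} (hc : c ∈ centers T ε col Y) :
    (1 - ε) * #T < #(shape T ε col Y c) := by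
  have := hits_add_card_missing T (layer T ε col Y (col c)) c
  have hc : (hits T (layer T ε col Y (col c)) c : ℝ) < ε * #T := hc
  rw [shape]
  linarith [show (hits T _ c : ℝ) + #(missing T _ c) = #T by exact_mod_cast this]

lemma union_biUnion_image_shape :
    Y ∪ ⋃ c ∈ centers T ε col Y, (· • c) '' (shape T ε col Y c : Set G) =
      Y ∪ (T : Set G) • centers T ε col Y := by
  classical
  refine subset_antisymm (union_subset_union_right _ (iUnion₂_subset fun c hc => ?_))
    (union_subset subset_union_left ?_)
  · rintro - ⟨t, ht, rfl⟩
    exact smul_mem_smul (shape_subset T ε col Y c ht) hc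
  · rintro - ⟨t, ht, c, hc, rfl⟩
    by_cases hZ : t • c ∈ layer T ε col Y (col c)
    · exact layer_subset T ε col Y _ hZ
    · exact Or.inr (mem_biUnion hc ⟨t, Finset.mem_filter.2 ⟨ht, hZ⟩, rfl⟩)

lemma disjoint_image_of_col_eq [DecidableEq G]
    (hcol : ∀ g ∈ T⁻¹ * T, g ≠ 1 → ∀ x : X, col (g • x) ≠ col x) {A B : Set G}
    (hA : A ⊆ T) (hB : B ⊆ T) {c c' : X} (hne : c ≠ c') (h : col c = col c') :
    Disjoint ((· • c) '' A) ((· • c') '' B) := by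
  rw [Set.disjoint_left]
  rintro - ⟨t, ht, rfl⟩ ⟨t', ht', htt'⟩
  simp only at htt'
  have hc' : (t'⁻¹ * t) • c = c' := by rw [mul_smul, ← htt', inv_smul_smul]
  refine hcol (t'⁻¹ * t) (Finset.mul_mem_mul (Finset.inv_mem_inv (hB ht')) (hA ht)) ?_ c ?_
  · rintro h1
    rw [h1, one_smul] at hc'
    exact hne hc'
  · rw [hc', h]

lemma disjoint_image_shape_of_col_lt {c c' : X} (hc : c ∈ centers T ε col Y)
    (h : col c < col c') :
    Disjoint ((· • c) '' (shape T ε col Y c : Set G))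
      ((· • c') '' (shape T ε col Y c' : Set G)) :=
  (disjoint_image_shape_layer T ε col Y c').symm.mono_left
    ((image_shape_subset_layer_succ T ε col Y hc).trans (layer_mono T ε col Y h))

lemma disjoint_image_shape [DecidableEq G]
    (hcol : ∀ g ∈ T⁻¹ * T, g ≠ 1 → ∀ x : X, col (g • x) ≠ col x) {c c' : X}
    (hc : c ∈ centers T ε col Y) (hc' : c' ∈ centers T ε col Y) (hne : c ≠ c') :
    Disjoint ((· • c) '' (shape T ε col Y c : Set G))
      ((· • c') '' (shape T ε col Y c' : Set G)) := by
  rcases lt_trichotomy (col c) (col c') with h | h | h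
  · exact disjoint_image_shape_of_col_lt T ε col Y hc h
  · exact disjoint_image_of_col_eq T col hcol (shape_subset T ε col Y c)
      (shape_subset T ε col Y c') hne h
  · exact (disjoint_image_shape_of_col_lt T ε col Y hc' h).symm

lemma mul_card_le_ncard_inter_image (hfree : ∀ g : G, g ≠ 1 → ∀ x : X, g • x ≠ x) (hε : ε ≤ 1)
    (x : X) :
    ε * #T ≤ ((Y ∪ (T : Set G) • centers T ε col Y) ∩ (· • x) '' (T : Set G)).ncard := by
  rw [← hits_eq_ncard T (injective_smul_left_of_free hfree x)]
  by_cases hx : x ∈ centers T ε col Y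
  · rw [hits_eq_card T (Z := Y ∪ _) fun t ht => Or.inr (smul_mem_smul ht hx)]
    exact mul_le_of_le_one_left (Nat.cast_nonneg _) hε
  · refine (not_lt.1 hx).trans (Nat.cast_le.2 (hits_mono T ?_ x))
    rw [← union_biUnion_image_shape]
    exact layer_subset T ε col Y _

section Measurability

variable [MeasurableSpace X] [MeasurableConstSMul G X]

lemma measurableSet_setOf_apply_col (hcol : Measurable col) {P : ℕ → X → Prop}
    (hP : ∀ n, MeasurableSet {x | P n x}) : MeasurableSet {x | P (col x) x} := by
  have : {x | P (col x) x} = ⋃ n, col ⁻¹' {n} ∩ {x | P n x} := by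
    ext x
    simp only [mem_ofPred_eq, mem_iUnion, mem_inter_iff, Set.mem_preimage, mem_singleton_iff]
    exact ⟨fun h => ⟨_, rfl, h⟩, by rintro ⟨n, rfl, h⟩; exact h⟩
  rw [this]
  exact .iUnion fun n => (hcol (measurableSet_singleton n)).inter (hP n)

variable (hY : MeasurableSet Y)
include hY

lemma measurableSet_layer (hcol : Measurable col) (n : ℕ) :
    MeasurableSet (layer T ε col Y n) := by
  induction n with
  | zero => exact hY
  | succ n ih =>
    refine ih.union ?_
    rw [biUnion_image_missing]
    exact .biUnion (Finset.countable_toSet T) fun t _ => MeasurableSet.const_smul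
      (((hcol (measurableSet_singleton n)).inter (measurableSet_hits_lt T ih _)).inter
        (ih.compl.preimage (measurable_const_smul t))) t

lemma measurableSet_centers (hcol : Measurable col) : MeasurableSet (centers T ε col Y) :=
  measurableSet_setOf_apply_col col hcol fun n =>
    measurableSet_hits_lt T (measurableSet_layer T ε col Y hY hcol n) _

lemma measurableSet_centers_shape_eq (hcol : Measurable col) (S : Finset G) :
    MeasurableSet {c | c ∈ centers T ε col Y ∧ shape T ε col Y c = S} :=
  measurableSet_setOf_apply_col col hcol fun n =>
    (measurableSet_hits_lt T (measurableSet_layer T ε col Y hY hcol n) _).inter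
      (measurableSet_missing_eq T (measurableSet_layer T ε col Y hY hcol n) S)

end Measurability

end Layers

end BorelPacking

open BorelPacking

theorem stmt8_general {G : Type*} [Group G]
    {X : Type*} [MeasurableSpace X] [StandardBorelSpace X] [MulAction G X]
    (hmeas : ∀ g : G, Measurable fun x : X => g • x)
    (hfree : ∀ g : G, g ≠ 1 → ∀ x : X, g • x ≠ x)
    (Y : Set X) (hY : MeasurableSet Y)
    (T : Finset G) (ε : ℝ) (hε2 : ε < 1 / 2) :
    ∃ (C : Set X) (Tc : X → Finset G), MeasurableSet C ∧
      (∀ S : Finset G, MeasurableSet {c | c ∈ C ∧ Tc c = S}) ∧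
      (∀ c ∈ C, Tc c ⊆ T ∧ (1 - ε) * (T.card : ℝ) < ((Tc c).card : ℝ)) ∧
      (∀ c ∈ C, ∀ c' ∈ C, c ≠ c' →
        Disjoint ((fun g : G => g • c) '' ((Tc c : Set G)))
          ((fun g : G => g • c') '' ((Tc c' : Set G)))) ∧
      (∀ c ∈ C, Disjoint ((fun g : G => g • c) '' ((Tc c : Set G))) Y) ∧
      (Y ∪ ⋃ c ∈ C, (fun g : G => g • c) '' ((Tc c : Set G)) = Y ∪ (T : Set G) • C) ∧
      (∀ x : X, ε * (T.card : ℝ) ≤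
        (((Y ∪ (T : Set G) • C) ∩ (fun g : G => g • x) '' (T : Set G)).ncard : ℝ)) := by
  classical
  have : MeasurableConstSMul G X := ⟨hmeas⟩
  obtain ⟨col, hcol_meas, hcol⟩ : ∃ col : X → ℕ, Measurable col ∧
      ∀ g ∈ T⁻¹ * T, g ≠ 1 → ∀ x : X, col (g • x) ≠ col x := by
    let := upgradeStandardBorel X
    exact exists_measurable_coloring hfree _
  refine ⟨centers T ε col Y, shape T ε col Y, measurableSet_centers T ε col Y hY hcol_meas,
    measurableSet_centers_shape_eq T ε col Y hY hcol_meas,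
    fun c hc => ⟨shape_subset T ε col Y c, lt_card_shape T ε col Y hc⟩,
    fun c hc c' hc' => disjoint_image_shape T ε col Y hcol hc hc',
    fun c _ => (disjoint_image_shape_layer T ε col Y c).mono_right (subset_layer T ε col Y _),
    union_biUnion_image_shape T ε col Y,
    mul_card_le_ncard_inter_image T ε col Y hfree (by linarith)⟩

/-- **Borel packing lemma.** Given a free Borel action `G ↷ X` of a countable group on a
standard Borel space, a Borel set `Y ⊆ X`, a finite `T ⊆ G`, and `ε ∈ (0,1/2)`, there are a
Borel set `C ⊆ X` and a Borel assignment `c ↦ T_c ⊆ T` with `|T_c| > (1-ε)|T|`, the sets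
`T_c c` (`c ∈ C`) pairwise disjoint and disjoint from `Y`,
`Y ∪ ⋃_{c ∈ C} T_c c = Y ∪ TC`, and `|(Y ∪ TC) ∩ Tx| ≥ ε|T|` for every `x ∈ X`. -/
theorem stmt8 {G : Type*} [Group G] [Countable G]
    {X : Type*} [MeasurableSpace X] [StandardBorelSpace X] [MulAction G X]
    (hmeas : ∀ g : G, Measurable fun x : X => g • x)
    (hfree : ∀ g : G, g ≠ 1 → ∀ x : X, g • x ≠ x)
    (Y : Set X) (hY : MeasurableSet Y)
    (T : Finset G) (ε : ℝ) (hε : 0 < ε) (hε2 : ε < 1 / 2) :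
    ∃ (C : Set X) (Tc : X → Finset G), MeasurableSet C ∧
      (∀ S : Finset G, MeasurableSet {c | c ∈ C ∧ Tc c = S}) ∧
      (∀ c ∈ C, Tc c ⊆ T ∧ (1 - ε) * (T.card : ℝ) < ((Tc c).card : ℝ)) ∧
      (∀ c ∈ C, ∀ c' ∈ C, c ≠ c' →
        Disjoint ((fun g : G => g • c) '' ((Tc c : Set G)))
          ((fun g : G => g • c') '' ((Tc c' : Set G)))) ∧
      (∀ c ∈ C, Disjoint ((fun g : G => g • c) '' ((Tc c : Set G))) Y) ∧
      (Y ∪ ⋃ c ∈ C, (fun g : G => g • c) '' ((Tc c : Set G)) = Y ∪ (T : Set G) • C) ∧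
      (∀ x : X, ε * (T.card : ℝ) ≤
        (((Y ∪ (T : Set G) • C) ∩ (fun g : G => g • x) '' (T : Set G)).ncard : ℝ)) :=
  stmt8_general hmeas hfree Y hY T ε hε2
end

section
/- Let G be a group, K ⊆ G finite, δ > 0, and 0 < ε < 1. If a nonempty finite set F ⊆ G is (K, δ)-invariant and a finite set F' ⊆ G satisfies |F' △ F| < ε|F|, then F' is (K, ((|K|+1)ε + δ)/(1−ε))-invariant. -/
/-!
Writing `D = F' △ F`, the triangle inequality for `△` gives
`KF' △ F' ⊆ (KF' △ KF) ∪ (KF △ F) ∪ D` with `KF' △ KF ⊆ KD`, so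
`|KF' △ F'| < δ|F| + (|K| + 1)ε|F|`. On the other hand `|F| ≤ |F'| + |D| < |F'| + ε|F|`,
i.e. `(1 - ε)|F| < |F'|`, which converts the bound in terms of `|F|` into one in terms of `|F'|`.
-/

open Set
open scoped Finset Pointwise symmDiff

namespace Finset

variable {α : Type*} [DecidableEq α]

theorem card_le_card_add_card_symmDiff (A B : Finset α) : #A ≤ #B + #(B ∆ A) := by
  rw [symmDiff_comm, add_comm]
  exact (card_le_card (le_symmDiff_sup_right A B)).trans (card_union_le _ _)

section Mul

variable [Mul α]

theorem mul_sdiff_mul_subset (s t u : Finset α) : (s * t) \ (s * u) ⊆ s * (t \ u) := by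
  intro x hx
  obtain ⟨hxt, hxu⟩ := mem_sdiff.1 hx
  obtain ⟨a, ha, b, hb, rfl⟩ := mem_mul.1 hxt
  exact mul_mem_mul ha (mem_sdiff.2 ⟨hb, fun hbu ↦ hxu (mul_mem_mul ha hbu)⟩)

theorem mul_symmDiff_mul_subset (s t u : Finset α) : (s * t) ∆ (s * u) ⊆ s * (t ∆ u) := by
  rw [symmDiff_def, symmDiff_def, sup_eq_union, sup_eq_union, mul_union]
  exact union_subset_union (mul_sdiff_mul_subset s t u) (mul_sdiff_mul_subset s u t)

theorem card_mul_symmDiff_le (K A B : Finset α) :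
    #((K * B) ∆ B) ≤ #((K * A) ∆ A) + #K * #(B ∆ A) + #(B ∆ A) := by
  have hsub : (K * B) ∆ B ⊆ K * (B ∆ A) ∪ (K * A) ∆ A ∪ B ∆ A := by
    calc (K * B) ∆ B ⊆ (K * B) ∆ (K * A) ∪ (K * A) ∆ B := symmDiff_triangle _ _ _
      _ ⊆ (K * B) ∆ (K * A) ∪ ((K * A) ∆ A ∪ A ∆ B) :=
          union_subset_union_right (symmDiff_triangle _ _ _)
      _ ⊆ K * (B ∆ A) ∪ (K * A) ∆ A ∪ B ∆ A := by
          rw [← union_assoc, symmDiff_comm A B]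
          gcongr
          exact mul_symmDiff_mul_subset K B A
  calc #((K * B) ∆ B) ≤ #(K * (B ∆ A) ∪ (K * A) ∆ A ∪ B ∆ A) := card_le_card hsub
    _ ≤ #(K * (B ∆ A)) + #((K * A) ∆ A) + #(B ∆ A) :=
        (card_union_le _ _).trans (Nat.add_le_add_right (card_union_le _ _) _)
    _ ≤ #((K * A) ∆ A) + #K * #(B ∆ A) + #(B ∆ A) := by
        have := card_mul_le (s := K) (t := B ∆ A)
        omega

end Mul

end Finset

theorem isInv_iff {G : Type*} [Group G] [DecidableEq G] (K F : Finset G) (δ : ℝ) :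
    IsInv K F δ ↔ F.Nonempty ∧ (#((K * F) ∆ F) : ℝ) < δ * #F := by
  rw [IsInv, ← Finset.coe_mul, ← Finset.coe_symmDiff, Set.ncard_coe_finset]

theorem stmt10_general {G : Type*} [Group G] [DecidableEq G]
    (K F F' : Finset G) (δ ε : ℝ) (hε1 : ε < 1)
    (hF : IsInv K F δ)
    (hF' : (((F' ∆ F : Finset G)).card : ℝ) < ε * F.card) :
    IsInv K F' (((K.card + 1) * ε + δ) / (1 - ε)) := by
  obtain ⟨hFne, hKF⟩ := (isInv_iff K F δ).1 hF
  set c := ((K.card : ℝ) + 1) * ε + δ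
  have hFpos : (0 : ℝ) < #F := by exact_mod_cast hFne.card_pos
  have hbound : (#((K * F') ∆ F') : ℝ) < c * #F := by
    have := Finset.card_mul_symmDiff_le K F F'
    have hK : (#K : ℝ) * #(F' ∆ F) ≤ #K * (ε * #F) := by gcongr
    calc (#((K * F') ∆ F') : ℝ) ≤ #((K * F) ∆ F) + #K * #(F' ∆ F) + #(F' ∆ F) := by
          exact_mod_cast this
      _ < c * #F := by linarith
  have hF'big : (1 - ε) * #F < #F' := by
    have : (#F : ℝ) ≤ #F' + #(F' ∆ F) := by
      exact_mod_cast Finset.card_le_card_add_card_symmDiff F F'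
    linarith
  have hc : 0 < c := pos_of_mul_pos_left ((Nat.cast_nonneg _).trans_lt hbound) hFpos.le
  have hF'pos : (0 : ℝ) < #F' := (mul_pos (sub_pos.2 hε1) hFpos).trans hF'big
  refine (isInv_iff K F' _).2 ⟨Finset.card_pos.1 (by exact_mod_cast hF'pos), ?_⟩
  calc (#((K * F') ∆ F') : ℝ) < c * #F := hbound
    _ = c / (1 - ε) * ((1 - ε) * #F) := by field_simp [(sub_pos.2 hε1).ne']
    _ ≤ c / (1 - ε) * #F' := by gcongr

/-- If `F` is `(K,δ)`-invariant and `|F' △ F| < ε|F|`, then `F'` is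
`(K, ((|K|+1)ε + δ)/(1-ε))`-invariant. -/
theorem stmt10 {G : Type*} [Group G] [DecidableEq G]
    (K F F' : Finset G) (δ ε : ℝ) (hδ : 0 < δ) (hε : 0 < ε) (hε1 : ε < 1)
    (hF : IsInv K F δ)
    (hF' : (((F' ∆ F : Finset G)).card : ℝ) < ε * F.card) :
    IsInv K F' (((K.card + 1) * ε + δ) / (1 - ε)) :=
  stmt10_general K F F' δ ε hε1 hF hF'
end

section
/- Let G be a countably infinite group and X the Cantor set. Then FrMin(G,X), the set of free minimal actions, is a G_δ subset of the space Act(G,X) of actions of G on X by homeomorphisms. -/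
/-!
Freeness is the countable intersection, over `g ≠ 1`, of the conditions "`α_g` has no fixed
point". Each is open: a fixed-point-free homeomorphism of a compact zero-dimensional space moves
every piece `A` of some clopen partition off itself, and any `β` with `β_g A = α_g A` for these
pieces is again fixed-point free.

Minimality is equivalent to asking that for every nonempty clopen `U` finitely many translates
`α_g U` cover `X`. This condition is open, since it only involves `α_g U` for `g` in a finite
set, and there are only countably many clopen sets because `X` is second countable.
-/

open Set

/-- `Z` is a Cantor set: a nonempty compact metrizable zero-dimensional space without
isolated points. -/
def IsCantorSet (Z : Type*) [TopologicalSpace Z] : Prop :=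
  Nonempty Z ∧ CompactSpace Z ∧ TopologicalSpace.MetrizableSpace Z ∧
    TotallyDisconnectedSpace Z ∧ ∀ z : Z, ¬ IsOpen ({z} : Set Z)

/-- An action of `G` on `X` by homeomorphisms. (Each `toFun g` is automatically a
homeomorphism, with continuous inverse `toFun g⁻¹`.) -/
structure ActG (G X : Type*) [Group G] [TopologicalSpace X] where
  toFun : G → X → X
  continuous_toFun : ∀ g : G, Continuous (toFun g)
  toFun_one : ∀ x : X, toFun 1 x = x
  toFun_mul : ∀ (g h : G) (x : X), toFun (g * h) x = toFun g (toFun h x)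

variable {G X : Type*} [Group G] [TopologicalSpace X]

/-- `P` is a clopen partition of `X`. -/
def IsClopenPartition (P : Finset (Set X)) : Prop :=
  (∀ A ∈ P, IsClopen A) ∧ (∀ A ∈ P, ∀ B ∈ P, A ≠ B → Disjoint A B) ∧
    ⋃₀ (P : Set (Set X)) = Set.univ

/-- The topology on `Act(G,X)` generated by the basic sets
`U_{α,P,F} = {β : β_s A = α_s A for all A ∈ P, s ∈ F}`, where `P` ranges over clopen
partitions of `X` and `F` over finite subsets of `G`. -/
def actTopology (G X : Type*) [Group G] [TopologicalSpace X] :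
    TopologicalSpace (ActG G X) :=
  TopologicalSpace.generateFrom
    {U | ∃ (α : ActG G X) (P : Finset (Set X)) (F : Finset G), IsClopenPartition P ∧
      U = {β : ActG G X | ∀ A ∈ P, ∀ s ∈ F, β.toFun s '' A = α.toFun s '' A}}

/-- The action `α` is free. -/
def ActG.IsFree (α : ActG G X) : Prop :=
  ∀ g : G, g ≠ 1 → ∀ x : X, α.toFun g x ≠ x

/-- The action `α` is minimal: every orbit is dense. -/
def ActG.IsMinimal (α : ActG G X) : Prop :=
  ∀ x : X, Dense (Set.range fun g : G => α.toFun g x)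

namespace ActG

variable (α : ActG G X)

lemma inv_apply (g : G) (x : X) : α.toFun g⁻¹ (α.toFun g x) = x := by
  rw [← α.toFun_mul, inv_mul_cancel, α.toFun_one]

lemma apply_inv (g : G) (x : X) : α.toFun g (α.toFun g⁻¹ x) = x := by
  rw [← α.toFun_mul, mul_inv_cancel, α.toFun_one]

def toHomeomorph (g : G) : X ≃ₜ X where
  toFun := α.toFun g
  invFun := α.toFun g⁻¹
  left_inv := α.inv_apply g
  right_inv := α.apply_inv g
  continuous_toFun := α.continuous_toFun g
  continuous_invFun := α.continuous_toFun g⁻¹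

lemma isOpen_image (g : G) {U : Set X} (hU : IsOpen U) : IsOpen (α.toFun g '' U) :=
  (α.toHomeomorph g).isOpenMap U hU

lemma inv_apply_mem_of_mem_image {g : G} {U : Set X} {x : X} (hx : x ∈ α.toFun g '' U) :
    α.toFun g⁻¹ x ∈ U := by
  obtain ⟨u, hu, rfl⟩ := hx
  rwa [α.inv_apply]

lemma isMinimal_iff_forall_isClopen [CompactSpace X] [T2Space X] [TotallyDisconnectedSpace X] :
    α.IsMinimal ↔ ∀ U : Set X, IsClopen U → U.Nonempty →
      ∃ F : Finset G, ⋃ g ∈ F, α.toFun g '' U = univ := by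
  constructor
  · intro hmin U hU hUne
    have hcover : univ ⊆ ⋃ g : G, α.toFun g '' U := fun x _ => by
      obtain ⟨_, ⟨g, rfl⟩, hgx⟩ := (hmin x).exists_mem_open hU.isOpen hUne
      exact mem_iUnion.2 ⟨g⁻¹, _, hgx, α.inv_apply g x⟩
    obtain ⟨F, hF⟩ :=
      isCompact_univ.elim_finite_subcover _ (fun g => α.isOpen_image g hU.isOpen) hcover
    exact ⟨F, univ_subset_iff.1 hF⟩
  · intro hcov x
    refine isTopologicalBasis_isClopen.dense_iff.2 fun U hU hUne => ?_
    obtain ⟨F, hF⟩ := hcov U hU hUne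
    obtain ⟨g, -, hxg⟩ := mem_iUnion₂.1 (hF ▸ mem_univ x)
    exact ⟨_, α.inv_apply_mem_of_mem_image hxg, g⁻¹, rfl⟩

end ActG

lemma IsClopenPartition.pair {U : Set X} (hU : IsClopen U) :
    IsClopenPartition ({U, Uᶜ} : Finset (Set X)) := by
  classical
  refine ⟨?_, ?_, ?_⟩
  · simp only [Finset.mem_insert, Finset.mem_singleton, forall_eq_or_imp, forall_eq]
    exact ⟨hU, hU.compl⟩
  · simp only [Finset.mem_insert, Finset.mem_singleton]
    rintro A (rfl | rfl) B (rfl | rfl) hne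
    exacts [absurd rfl hne, disjoint_compl_right, disjoint_compl_left, absurd rfl hne]
  · simp

lemma exists_disjoint_clopen_refinement (s : Finset (Set X)) (hs : ∀ U ∈ s, IsClopen U) :
    ∃ P : Finset (Set X), (∀ A ∈ P, IsClopen A) ∧ (∀ A ∈ P, ∀ B ∈ P, A ≠ B → Disjoint A B) ∧
      ⋃₀ (s : Set (Set X)) ⊆ ⋃₀ (P : Set (Set X)) ∧ ∀ A ∈ P, ∃ U ∈ s, A ⊆ U := by
  classical
  induction s using Finset.induction_on with
  | empty => exact ⟨∅, by simp, by simp, by simp, by simp⟩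
  | insert a s _ ih =>
    obtain ⟨P, hPcl, hPdis, hPcov, hPsub⟩ :=
      ih fun U hU => hs U (Finset.mem_insert_of_mem hU)
    have ha : IsClopen a := hs a (Finset.mem_insert_self a s)
    refine ⟨insert a (P.image (· \ a)), ?_, ?_, ?_, ?_⟩
    · simp only [Finset.mem_insert, Finset.mem_image]
      rintro _ (rfl | ⟨B, hB, rfl⟩)
      exacts [ha, (hPcl B hB).diff ha]
    · simp only [Finset.mem_insert, Finset.mem_image]
      rintro _ (rfl | ⟨B, hB, rfl⟩) _ (rfl | ⟨C, hC, rfl⟩) hne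
      · exact absurd rfl hne
      · exact disjoint_sdiff_right
      · exact disjoint_sdiff_left
      · exact (hPdis B hB C hC fun h => hne (h ▸ rfl)).mono sdiff_subset sdiff_subset
    · rintro x ⟨U, hU, hxU⟩
      by_cases hxa : x ∈ a
      · exact ⟨a, by simp, hxa⟩
      · rw [Finset.coe_insert, mem_insert_iff] at hU
        obtain rfl | hU := hU
        · exact absurd hxU hxa
        obtain ⟨B, hB, hxB⟩ := hPcov ⟨U, hU, hxU⟩
        exact ⟨B \ a, Finset.mem_coe.2 (Finset.mem_insert_of_mem (Finset.mem_image_of_mem _ hB)),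
          hxB, hxa⟩
    · simp only [Finset.mem_insert, Finset.mem_image, exists_eq_or_imp]
      rintro _ (rfl | ⟨B, hB, rfl⟩)
      · exact .inl subset_rfl
      · obtain ⟨U, hU, hBU⟩ := hPsub B hB
        exact .inr ⟨U, hU, sdiff_subset.trans hBU⟩

lemma exists_clopenPartition_subset_of_cover (s : Finset (Set X)) (hs : ∀ U ∈ s, IsClopen U)
    (hcov : ⋃₀ (s : Set (Set X)) = univ) :
    ∃ P : Finset (Set X), IsClopenPartition P ∧ ∀ A ∈ P, ∃ U ∈ s, A ⊆ U := by
  obtain ⟨P, hPcl, hPdis, hPcov, hPsub⟩ := exists_disjoint_clopen_refinement s hs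
  exact ⟨P, ⟨hPcl, hPdis, univ_subset_iff.1 (hcov ▸ hPcov)⟩, hPsub⟩

lemma exists_clopenPartition_disjoint_image [CompactSpace X] [TotallySeparatedSpace X]
    {T : X → X} (hT : Continuous T) (hfix : ∀ x, T x ≠ x) :
    ∃ P : Finset (Set X), IsClopenPartition P ∧ ∀ A ∈ P, Disjoint (T '' A) A := by
  classical
  have hsep : ∀ x, ∃ D : Set X, IsClopen D ∧ x ∈ D ∧ Disjoint (T '' D) D := fun x => by
    obtain ⟨C, hC, hxC, hTxC⟩ := exists_isClopen_of_totally_separated (hfix x).symm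
    refine ⟨C ∩ T ⁻¹' Cᶜ, hC.inter (hC.compl.preimage hT), ⟨hxC, hTxC⟩, ?_⟩
    refine disjoint_left.2 ?_
    rintro _ ⟨y, hy, rfl⟩ hTy
    exact hy.2 hTy.1
  choose D hDcl hxD hDdis using hsep
  obtain ⟨t, ht⟩ := isCompact_univ.elim_finite_subcover D (fun x => (hDcl x).isOpen)
    fun x _ => mem_iUnion.2 ⟨x, hxD x⟩
  have hcov : ⋃₀ ((t.image D : Finset (Set X)) : Set (Set X)) = univ := by
    rw [Finset.coe_image, sUnion_image]
    exact univ_subset_iff.1 ht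
  obtain ⟨P, hP, hPsub⟩ :=
    exists_clopenPartition_subset_of_cover _ (by simpa using fun x _ => hDcl x) hcov
  refine ⟨P, hP, fun A hA => ?_⟩
  obtain ⟨_, hU, hAU⟩ := hPsub A hA
  obtain ⟨x, -, rfl⟩ := Finset.mem_image.1 hU
  exact (hDdis x).mono (image_mono hAU) hAU

lemma countable_setOf_isClopen [CompactSpace X] [T2Space X] [TotallyDisconnectedSpace X]
    [SecondCountableTopology X] : {U : Set X | IsClopen U}.Countable := by
  have := TopologicalSpace.Clopens.countable_iff_secondCountable.2 ‹_›
  refine (Set.countable_range ((↑) : TopologicalSpace.Clopens X → Set X)).mono fun U hU => ?_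
  exact ⟨⟨U, hU⟩, rfl⟩

section ActTopology

attribute [local instance] actTopology

lemma ActG.isOpen_setOf_image_eq (α : ActG G X) {P : Finset (Set X)} (hP : IsClopenPartition P)
    (F : Finset G) :
    IsOpen {β : ActG G X | ∀ A ∈ P, ∀ s ∈ F, β.toFun s '' A = α.toFun s '' A} :=
  TopologicalSpace.isOpen_generateFrom_of_mem ⟨α, P, F, hP, rfl⟩

lemma isOpen_setOf_forall_apply_ne [CompactSpace X] [TotallySeparatedSpace X] (g : G) :
    IsOpen {β : ActG G X | ∀ x, β.toFun g x ≠ x} := by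
  refine isOpen_iff_forall_mem_open.2 fun α hα => ?_
  obtain ⟨P, hP, hPdis⟩ := exists_clopenPartition_disjoint_image (α.continuous_toFun g) hα
  refine ⟨_, fun β hβ x hx => ?_, α.isOpen_setOf_image_eq hP {g}, fun _ _ _ _ => rfl⟩
  obtain ⟨A, hA, hxA⟩ := mem_sUnion.1 (hP.2.2 ▸ mem_univ x)
  have hβx : β.toFun g x ∈ α.toFun g '' A :=
    hβ A hA g (Finset.mem_singleton_self g) ▸ ⟨x, hxA, rfl⟩
  exact disjoint_left.1 (hPdis A hA) hβx (by rwa [hx])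

lemma isGδ_setOf_isFree [Countable G] [CompactSpace X] [TotallySeparatedSpace X] :
    IsGδ {α : ActG G X | α.IsFree} := by
  have : {α : ActG G X | α.IsFree} = ⋂ g ∈ ({1}ᶜ : Set G), {β | ∀ x, β.toFun g x ≠ x} := by
    ext α
    simp [ActG.IsFree]
  rw [this]
  exact .biInter (to_countable _) fun g _ => (isOpen_setOf_forall_apply_ne g).isGδ

lemma isOpen_setOf_exists_finset_cover {U : Set X} (hU : IsClopen U) :
    IsOpen {β : ActG G X | ∃ F : Finset G, ⋃ g ∈ F, β.toFun g '' U = univ} := by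
  refine isOpen_iff_forall_mem_open.2 fun α ⟨F, hF⟩ => ?_
  refine ⟨_, fun β hβ => ⟨F, ?_⟩, α.isOpen_setOf_image_eq (.pair hU) F, fun _ _ _ _ => rfl⟩
  rw [← hF]
  exact iUnion₂_congr fun g hg => hβ U (by simp) g hg

lemma isGδ_setOf_isMinimal [CompactSpace X] [T2Space X] [TotallyDisconnectedSpace X]
    [SecondCountableTopology X] : IsGδ {α : ActG G X | α.IsMinimal} := by
  have : {α : ActG G X | α.IsMinimal} = ⋂ U ∈ {U : Set X | IsClopen U ∧ U.Nonempty},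
      {β | ∃ F : Finset G, ⋃ g ∈ F, β.toFun g '' U = univ} := by
    ext α
    simp only [mem_ofPred_eq, mem_iInter, and_imp, α.isMinimal_iff_forall_isClopen]
  rw [this]
  exact .biInter (countable_setOf_isClopen.mono fun _ hU => hU.1)
    fun U hU => (isOpen_setOf_exists_finset_cover hU.1).isGδ

end ActTopology

theorem stmt14_general (G X : Type*) [Group G] [Countable G]
    [TopologicalSpace X] (hX : IsCantorSet X) :
    @IsGδ (ActG G X) (actTopology G X) {α : ActG G X | α.IsFree ∧ α.IsMinimal} := by
  obtain ⟨-, _, _, _, -⟩ := hX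
  let := actTopology G X
  exact isGδ_setOf_isFree.inter isGδ_setOf_isMinimal

/-- For a countably infinite group `G` and the Cantor set `X`, the set `FrMin(G,X)` of free
minimal actions is a `G_δ` subset of `Act(G,X)`. -/
theorem stmt14 (G X : Type*) [Group G] [Countable G] [Infinite G]
    [TopologicalSpace X] (hX : IsCantorSet X) :
    @IsGδ (ActG G X) (actTopology G X) {α : ActG G X | α.IsFree ∧ α.IsMinimal} :=
  stmt14_general G X hX
end

section
/- Let G be a group, let F ⊆ G be a finite symmetric set containing the identity e, let Q be a positive integer, and let T' ⊆ G be a finite set. Define B_Q = ⋂_{s ∈ F^Q} sT', B_0 = T' ∖ F^{Q−1}B_Q, and B_q = F^{Q−q}B_Q ∖ F^{Q−q−1}B_Q for q = 1, …, Q−1 (with the convention F^0 = {e}). Then for every s ∈ F one has sB_Q ⊆ B_{Q−1} ∪ B_Q, and sB_q ⊆ B_{q−1} ∪ B_q ∪ B_{q+1} for every q = 1, …, Q−1. -/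
/-!
Write `L k = F^k B_Q`. Then `B_Q = L 0`, and for `1 ≤ q < Q` the set `B_q` is the shell
`L (Q-q) \ L (Q-q-1)` of elements at `F`-distance exactly `Q - q` from `B_Q`, while `B_0`
contains the next shell `L Q \ L (Q-1)`, because `F^Q B_Q ⊆ T'` by the definition of `B_Q`
and the symmetry of `F`. Left multiplication by `s ∈ F` changes the distance to `B_Q` by at
most one, since both `s` and `s⁻¹` lie in `F`.
-/

open Set
open scoped Pointwise

section PowShell

variable {G : Type*} [Group G]

def powShell (F A : Set G) : ℕ → Set G
  | 0 => A
  | k + 1 => (F ^ (k + 1) * A) \ (F ^ k * A)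

variable {F A : Set G} {s x : G} {k : ℕ}

theorem smul_mem_pow_succ_mul (hs : s ∈ F) (hx : x ∈ F ^ k * A) :
    s • x ∈ F ^ (k + 1) * A := by
  obtain ⟨f, hf, a, ha, rfl⟩ := hx
  rw [smul_eq_mul, ← mul_assoc, pow_succ']
  exact mul_mem_mul (mul_mem_mul hs hf) ha

theorem mem_pow_succ_mul_of_smul_mem (hs : s⁻¹ ∈ F) (hx : s • x ∈ F ^ k * A) :
    x ∈ F ^ (k + 1) * A := by
  simpa using smul_mem_pow_succ_mul hs hx

theorem smul_subset_powShell_one_union_zero (hs : s ∈ F) :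
    s • A ⊆ powShell F A 1 ∪ powShell F A 0 := by
  rintro _ ⟨a, ha, rfl⟩
  by_cases h : s • a ∈ A
  · exact Or.inr h
  · refine Or.inl ⟨smul_mem_pow_succ_mul hs (k := 0) ?_, by simpa using h⟩
    simpa using ha

theorem smul_powShell_succ_subset (hs : s ∈ F) (hs' : s⁻¹ ∈ F) :
    s • powShell F A (k + 1) ⊆ powShell F A (k + 2) ∪ powShell F A (k + 1) ∪ powShell F A k := by
  rintro _ ⟨x, ⟨hx, hx'⟩, rfl⟩
  by_cases h₁ : s • x ∈ F ^ (k + 1) * A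
  · by_cases h₀ : s • x ∈ F ^ k * A
    · right
      cases k with
      | zero => simpa [powShell] using h₀
      | succ j => exact ⟨h₀, fun h => hx' (mem_pow_succ_mul_of_smul_mem hs' h)⟩
    · exact Or.inl (Or.inr ⟨h₁, h₀⟩)
  · exact Or.inl (Or.inl ⟨smul_mem_pow_succ_mul hs hx, h₁⟩)

end PowShell

theorem inv_mul_iInter_smul_subset {G : Type*} [Group G] (S T : Set G) :
    S⁻¹ * ⋂ s ∈ S, s • T ⊆ T := by
  rintro _ ⟨f, hf, b, hb, rfl⟩
  have : b ∈ f⁻¹ • T := mem_iInter₂.mp hb f⁻¹ hf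
  rw [mem_smul_set_iff_inv_smul_mem, inv_inv, smul_eq_mul] at this
  exact this

theorem stmt16_general {G : Type*} [Group G]
    (F : Finset G) (hsym : ∀ g ∈ F, g⁻¹ ∈ F)
    (Q : ℕ) (hQ : 0 < Q) (T' : Finset G)
    (B : ℕ → Set G)
    (hBQ : B Q = ⋂ s ∈ ((F : Set G) ^ Q), s • (T' : Set G))
    (hB0 : B 0 = (T' : Set G) \ ((F : Set G) ^ (Q - 1) * B Q))
    (hBq : ∀ q : ℕ, 1 ≤ q → q ≤ Q - 1 →
      B q = ((F : Set G) ^ (Q - q) * B Q) \ ((F : Set G) ^ (Q - q - 1) * B Q)) :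
    ∀ s ∈ F, s • B Q ⊆ B (Q - 1) ∪ B Q ∧
      ∀ q : ℕ, 1 ≤ q → q ≤ Q - 1 → s • B q ⊆ B (q - 1) ∪ B q ∪ B (q + 1) := by
  have hFinv : (F : Set G)⁻¹ = F := Set.ext fun g => ⟨fun h => by simpa using hsym _ h, hsym g⟩
  have hT : (F : Set G) ^ Q * B Q ⊆ T' := by
    simpa [hBQ, ← inv_pow, hFinv] using inv_mul_iInter_smul_subset ((F : Set G) ^ Q) T'
  have hshell_eq : ∀ k < Q, B (Q - k) = powShell F (B Q) k := by
    rintro (_ | k) hk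
    · rfl
    · rw [hBq _ (by omega) (by omega), show Q - (Q - (k + 1)) = k + 1 by omega,
        show k + 1 - 1 = k by omega, powShell]
  have hshell_sub : ∀ k ≤ Q, powShell F (B Q) k ⊆ B (Q - k) := by
    intro k hk
    rcases hk.lt_or_eq with hk | rfl
    · exact (hshell_eq k hk).ge
    · obtain ⟨j, rfl⟩ : ∃ j, k = j + 1 := ⟨k - 1, by omega⟩
      rw [Nat.sub_self, hB0]
      rintro x ⟨hx, hx'⟩
      exact ⟨hT hx, hx'⟩
  intro s hs
  refine ⟨(smul_subset_powShell_one_union_zero hs).trans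
    (union_subset_union (hshell_sub 1 hQ) (hshell_sub 0 (Nat.zero_le Q))), ?_⟩
  intro q hq1 hq2
  obtain ⟨j, rfl⟩ : ∃ j, q = Q - (j + 1) := ⟨Q - q - 1, by omega⟩
  rw [show Q - (j + 1) + 1 = Q - j by omega, hshell_eq (j + 1) (by omega)]
  exact (smul_powShell_succ_subset hs (hsym s hs)).trans <| union_subset_union
    (union_subset_union (hshell_sub (j + 2) (by omega)) subset_rfl)
    (hshell_sub j (by omega))

/-- **Band structure of the sets `B_q`.** Let `F ⊆ G` be a finite symmetric set containing
the identity, `Q` a positive integer, and `T' ⊆ G` finite. With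
`B_Q = ⋂_{s ∈ F^Q} sT'`, `B_0 = T' ∖ F^{Q-1}B_Q`, and
`B_q = F^{Q-q}B_Q ∖ F^{Q-q-1}B_Q` for `q = 1, …, Q-1`, every `s ∈ F` satisfies
`sB_Q ⊆ B_{Q-1} ∪ B_Q` and `sB_q ⊆ B_{q-1} ∪ B_q ∪ B_{q+1}` for `q = 1, …, Q-1`. -/
theorem stmt16 {G : Type*} [Group G]
    (F : Finset G) (hsym : ∀ g ∈ F, g⁻¹ ∈ F) (he : (1 : G) ∈ F)
    (Q : ℕ) (hQ : 0 < Q) (T' : Finset G)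
    (B : ℕ → Set G)
    (hBQ : B Q = ⋂ s ∈ ((F : Set G) ^ Q), s • (T' : Set G))
    (hB0 : B 0 = (T' : Set G) \ ((F : Set G) ^ (Q - 1) * B Q))
    (hBq : ∀ q : ℕ, 1 ≤ q → q ≤ Q - 1 →
      B q = ((F : Set G) ^ (Q - q) * B Q) \ ((F : Set G) ^ (Q - q - 1) * B Q)) :
    ∀ s ∈ F, s • B Q ⊆ B (Q - 1) ∪ B Q ∧
      ∀ q : ℕ, 1 ≤ q → q ≤ Q - 1 → s • B q ⊆ B (q - 1) ∪ B q ∪ B (q + 1) :=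
  stmt16_general F hsym Q hQ T' B hBQ hB0 hBq
end
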